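/- arXiv:2210.02271 — 7 statements merged into one kernel-verified Lean document; each statement's English description precedes it below -/
import Mathlib

section
/- Let S be a finite set, a ∈ S, and x ∈ S^T a sequence in which a occurs at least twice. Let σ be any permutation of the a-blocks of x and let σ·x denote the block-permuted sequence. Then σ·x ∈ S^T has the same length as x, the same first element (x_1), the same last element (x_T), the same number of occurrences of a, and the same transition counts: n_{ij}(σ·x) = n_{ij}(x) for all i, j ∈ S. -/
/-! Every `a`-block `B`, and also the prefix `p`, is followed by a segment starting with `a`, so
the transitions it contributes, including the one out of its last letter, are the adjacent pairs
of `B ++ [a]`: they depend on the block alone and not on its position. Hence the list of adjacent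
pairs of `p ++ B₁ ++ ⋯ ++ B_m ++ s` is the concatenation of those of `p ++ [a]`, of the
`B_k ++ [a]` and of `s`, and permuting the blocks only permutes this list. The remaining
invariants follow because the block-permuted sequence is a permutation of `x` with the same
prefix and suffix, and every block starts with `a`. -/

/-- The number of transitions from `i` to `j` in a finite sequence (list) `x`:
`n_{ij}(x) = Σ_{t=1}^{T-1} 1[x_t = i, x_{t+1} = j]`. -/
def transCountL {S : Type*} [DecidableEq S] (x : List S) (i j : S) : ℕ :=
  (x.zip x.tail).count (i, j)

namespace List

variable {α : Type*}

def adjacentPairs (l : List α) : List (α × α) := l.zip l.tail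

@[simp] theorem adjacentPairs_singleton (x : α) : adjacentPairs [x] = [] := rfl

@[simp] theorem adjacentPairs_cons_cons (x y : α) (l : List α) :
    adjacentPairs (x :: y :: l) = (x, y) :: adjacentPairs (y :: l) := rfl

theorem adjacentPairs_append_of_head?_eq {u v : List α} {a : α} (hv : v.head? = some a) :
    adjacentPairs (u ++ v) = adjacentPairs (u ++ [a]) ++ adjacentPairs v := by
  obtain ⟨v, rfl⟩ : ∃ v', v = a :: v' := by
    cases v <;> simp_all
  induction u with
  | nil => simp
  | cons x u ih =>
    cases u with
    | nil => simp
    | cons y u => simpa using ih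

theorem head?_flatten_append_of_head?_eq {L : List (List α)} {s : List α} {a : α}
    (hL : ∀ B ∈ L, B.head? = some a) (hs : s.head? = some a) :
    (L.flatten ++ s).head? = some a := by
  induction L with
  | nil => exact hs
  | cons B L ih =>
    rw [flatten_cons, append_assoc, head?_append, hL B mem_cons_self, Option.some_or]

theorem adjacentPairs_flatten_append {L : List (List α)} {s : List α} {a : α}
    (hL : ∀ B ∈ L, B.head? = some a) (hs : s.head? = some a) :
    adjacentPairs (L.flatten ++ s) =
      (L.map fun B => adjacentPairs (B ++ [a])).flatten ++ adjacentPairs s := by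
  induction L with
  | nil => simp
  | cons B L ih =>
    have hL' : ∀ C ∈ L, C.head? = some a := fun C hC => hL C (mem_cons_of_mem B hC)
    rw [flatten_cons, append_assoc,
      adjacentPairs_append_of_head?_eq (head?_flatten_append_of_head?_eq hL' hs), ih hL']
    simp

theorem Perm.adjacentPairs_append_flatten_append {L₁ L₂ : List (List α)} (h : L₁.Perm L₂)
    (p s : List α) {a : α} (hL : ∀ B ∈ L₁, B.head? = some a) (hs : s.head? = some a) :
    (adjacentPairs (p ++ L₁.flatten ++ s)).Perm (adjacentPairs (p ++ L₂.flatten ++ s)) := by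
  have hL₂ : ∀ B ∈ L₂, B.head? = some a := fun B hB => hL B (h.mem_iff.2 hB)
  rw [append_assoc, append_assoc,
    adjacentPairs_append_of_head?_eq (head?_flatten_append_of_head?_eq hL hs),
    adjacentPairs_append_of_head?_eq (head?_flatten_append_of_head?_eq hL₂ hs),
    adjacentPairs_flatten_append hL hs, adjacentPairs_flatten_append hL₂ hs]
  exact (((h.map _).flatten).append_right _).append_left _

end List

theorem transCountL_eq_of_perm {S : Type*} [DecidableEq S] {x y : List S}
    (h : x.adjacentPairs.Perm y.adjacentPairs) (i j : S) :
    transCountL x i j = transCountL y i j :=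
  h.count_eq (i, j)

/-- `x = p ++ B₁ ++ ⋯ ++ B_{d-1} ++ s` cuts `x` at the occurrences of `a`: `p` is the part before
the first one, `B_k` the `k`-th `a`-block and `s` the part from the last one on. The
block-permuted sequence is `p ++ B_{σ(1)} ++ ⋯ ++ B_{σ(d-1)} ++ s`. -/
theorem blockPermute_preserves_transCounts_general
    {S : Type*} [DecidableEq S] (a : S) (d : ℕ)
    (p s : List S) (B : Fin (d - 1) → List S)
    (hs₁ : s ≠ []) (hs₂ : s.head? = some a)
    (hB₂ : ∀ k, (B k).head? = some a)
    (x : List S) (hx : x = p ++ (List.ofFn B).flatten ++ s)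
    (σ : Equiv.Perm (Fin (d - 1))) :
    (p ++ (List.ofFn (B ∘ σ)).flatten ++ s).length = x.length ∧
      (p ++ (List.ofFn (B ∘ σ)).flatten ++ s).head? = x.head? ∧
      (p ++ (List.ofFn (B ∘ σ)).flatten ++ s).getLast? = x.getLast? ∧
      (p ++ (List.ofFn (B ∘ σ)).flatten ++ s).count a = x.count a ∧
      ∀ i j : S, transCountL (p ++ (List.ofFn (B ∘ σ)).flatten ++ s) i j = transCountL x i j := by
  subst hx
  have hblocks : (List.ofFn (B ∘ σ)).Perm (List.ofFn B) := σ.ofFn_comp_perm B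
  have hheads : ∀ C ∈ List.ofFn (B ∘ σ), C.head? = some a := by
    simpa [List.mem_ofFn] using fun k => hB₂ (σ k)
  have hseq : (p ++ (List.ofFn (B ∘ σ)).flatten ++ s).Perm (p ++ (List.ofFn B).flatten ++ s) :=
    (hblocks.flatten.append_left p).append_right s
  refine ⟨hseq.length_eq, ?_, ?_, hseq.count_eq a,
    transCountL_eq_of_perm (hblocks.adjacentPairs_append_flatten_append p s hheads hs₂)⟩
  · rw [List.append_assoc, List.append_assoc, List.head?_append (l := p),
      List.head?_append (l := p), List.head?_flatten_append_of_head?_eq hheads hs₂,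
      List.head?_flatten_append_of_head?_eq (fun C hC => hheads C (hblocks.mem_iff.2 hC)) hs₂]
  · rw [List.getLast?_append_of_ne_nil _ hs₁, List.getLast?_append_of_ne_nil _ hs₁]

/-- Permuting the `a`-blocks of a sequence preserves the length, the first element, the
last element, the number of occurrences of `a`, and all transition counts.
Here `x = p ++ B₁ ++ ⋯ ++ B_{d-1} ++ s` where `a` occurs `d ≥ 2` times in `x`: the prefix
`p` contains no `a`, each block `B_k` starts with `a` and contains no further `a`, and the
suffix `s` starts with `a` (the last occurrence) and contains no further `a`.  The
block-permuted sequence is `p ++ B_{σ(1)} ++ ⋯ ++ B_{σ(d-1)} ++ s`. -/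
theorem blockPermute_preserves_transCounts
    {S : Type*} [DecidableEq S] (a : S) (d : ℕ) (hd : 2 ≤ d)
    (p s : List S) (B : Fin (d - 1) → List S)
    (hp : a ∉ p)
    (hs₁ : s ≠ []) (hs₂ : s.head? = some a) (hs₃ : a ∉ s.tail)
    (hB₁ : ∀ k, B k ≠ []) (hB₂ : ∀ k, (B k).head? = some a) (hB₃ : ∀ k, a ∉ (B k).tail)
    (x : List S) (hx : x = p ++ (List.ofFn B).flatten ++ s)
    (σ : Equiv.Perm (Fin (d - 1))) :
    (p ++ (List.ofFn (B ∘ σ)).flatten ++ s).length = x.length ∧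
      (p ++ (List.ofFn (B ∘ σ)).flatten ++ s).head? = x.head? ∧
      (p ++ (List.ofFn (B ∘ σ)).flatten ++ s).getLast? = x.getLast? ∧
      (p ++ (List.ofFn (B ∘ σ)).flatten ++ s).count a = x.count a ∧
      ∀ i j : S, transCountL (p ++ (List.ofFn (B ∘ σ)).flatten ++ s) i j = transCountL x i j :=
  blockPermute_preserves_transCounts_general a d p s B hs₁ hs₂ hB₂ x hx σ
end

section
/- Let S be a finite set and let X₁, X₂, … be a partially exchangeable process with values in S. Then for every T ≥ 1, every a ∈ S, every x ∈ S^T in which a occurs at least twice, and every permutation σ of the a-blocks of x, P(X₁ = x₁, …, X_T = x_T) = P(X₁ = (σ·x)₁, …, X_T = (σ·x)_T). In particular this holds whenever the process is a mixture of Markov chains. -/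
/-!
Partial exchangeability reduces the claim to equality of lengths, first states and transition
counts. Because every block and the suffix begin with `a`, the transitions of
`p ++ B₁ ++ ⋯ ++ B_{d-1} ++ s` split as those of `p ++ [a]`, of each `B_k ++ [a]` and of `s`.
Permuting the blocks only permutes these pieces, so the transition counts are unchanged.
-/

open MeasureTheory

def cylinder {Ω S : Type*} (X : ℕ → Ω → S) (x : List S) : Set Ω :=
  {ω | (List.ofFn fun k : Fin x.length => X k.val ω) = x}

def IsPartiallyExchangeableL {Ω : Type*} [MeasurableSpace Ω] (P : Measure Ω)
    {S : Type*} [DecidableEq S] (X : ℕ → Ω → S) : Prop :=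
  ∀ x x' : List S, x ≠ [] → x.length = x'.length → x.head? = x'.head? →
    (∀ i j : S, transCountL x i j = transCountL x' i j) →
    P (cylinder X x) = P (cylinder X x')

namespace List

variable {α : Type*}

def transitions (l : List α) : List (α × α) :=
  l.zip l.tail

theorem transitions_append_of_head?_eq_some {l m : List α} {c : α} (hm : m.head? = some c) :
    (l ++ m).transitions = (l ++ [c]).transitions ++ m.transitions := by
  obtain ⟨m, rfl⟩ : ∃ m', m = c :: m' := by
    cases m with
    | nil => simp at hm
    | cons c' m' => exact ⟨m', by simpa using hm⟩
  induction l with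
  | nil => simp [transitions]
  | cons x l ih => cases l <;> simp_all [transitions]

theorem head?_flatten_append_of_forall {L : List (List α)} {s : List α} {a : α}
    (hL : ∀ b ∈ L, b.head? = some a) (hs : s.head? = some a) :
    (L.flatten ++ s).head? = some a := by
  induction L with
  | nil => simpa using hs
  | cons b L _ => simp [head?_append, hL b mem_cons_self]

theorem transitions_flatten_append {L : List (List α)} {s : List α} {a : α}
    (hL : ∀ b ∈ L, b.head? = some a) (hs : s.head? = some a) :
    (L.flatten ++ s).transitions = L.flatMap (fun b => (b ++ [a]).transitions) ++ s.transitions := by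
  induction L with
  | nil => simp
  | cons b L ih =>
    have hL' : ∀ b ∈ L, b.head? = some a := fun b hb => hL b (mem_cons_of_mem _ hb)
    rw [flatten_cons, append_assoc,
      transitions_append_of_head?_eq_some (head?_flatten_append_of_forall hL' hs), ih hL',
      flatMap_cons, append_assoc]

theorem transitions_append_flatten_append_perm (p : List α) {L L' : List (List α)} {s : List α}
    {a : α} (hLL' : L ~ L') (hL : ∀ b ∈ L, b.head? = some a) (hs : s.head? = some a) :
    (p ++ L.flatten ++ s).transitions ~ (p ++ L'.flatten ++ s).transitions := by
  have hL' : ∀ b ∈ L', b.head? = some a := fun b hb => hL b (hLL'.mem_iff.2 hb)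
  simp only [append_assoc]
  rw [transitions_append_of_head?_eq_some (head?_flatten_append_of_forall hL hs),
    transitions_append_of_head?_eq_some (head?_flatten_append_of_forall hL' hs),
    transitions_flatten_append hL hs, transitions_flatten_append hL' hs]
  exact ((hLL'.flatMap_right _).append_right _).append_left _

end List

theorem partiallyExchangeable_blockPermute_invariant_general
    {Ω : Type*} [MeasurableSpace Ω] (P : Measure Ω)
    {S : Type*} [DecidableEq S] (X : ℕ → Ω → S)
    (hPE : IsPartiallyExchangeableL P X)
    (a : S) (d : ℕ)
    (p s : List S) (B : Fin (d - 1) → List S)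
    (hs₂ : s.head? = some a)
    (hB₂ : ∀ k, (B k).head? = some a)
    (x : List S) (hx : x = p ++ (List.ofFn B).flatten ++ s)
    (σ : Equiv.Perm (Fin (d - 1))) :
    P (cylinder X x) = P (cylinder X (p ++ (List.ofFn (B ∘ σ)).flatten ++ s)) := by
  subst hx
  have hblocks : ∀ b ∈ List.ofFn B, b.head? = some a := by
    intro b hb
    obtain ⟨k, rfl⟩ := List.mem_ofFn.1 hb
    exact hB₂ k
  have hperm : (List.ofFn B).Perm (List.ofFn (B ∘ σ)) := (σ.ofFn_comp_perm B).symm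
  have hblocks' : ∀ b ∈ List.ofFn (B ∘ σ), b.head? = some a :=
    fun b hb => hblocks b (hperm.mem_iff.2 hb)
  apply hPE
  · have hs : s ≠ [] := by rintro rfl; simp at hs₂
    simp [hs]
  · exact ((hperm.flatten.append_left p).append_right s).length_eq
  · simp only [List.append_assoc, List.head?_append (l := p),
      List.head?_flatten_append_of_forall hblocks hs₂,
      List.head?_flatten_append_of_forall hblocks' hs₂]
  · exact fun i j => (List.transitions_append_flatten_append_perm p hperm hblocks hs₂).count_eq _

/-- For a partially exchangeable process, the probability of a finite sequence is invariant
under permutations of its `a`-blocks.  Here `x = p ++ B₁ ++ ⋯ ++ B_{d-1} ++ s`, where `a`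
occurs `d ≥ 2` times in `x`: the prefix `p` has no `a`, each block `B_k` starts with `a` and
contains no further `a`, the suffix `s` starts with `a` and contains no further `a`, and the
block-permuted sequence is `σ·x = p ++ B_{σ(1)} ++ ⋯ ++ B_{σ(d-1)} ++ s`. -/
theorem partiallyExchangeable_blockPermute_invariant
    {Ω : Type*} [MeasurableSpace Ω] (P : Measure Ω) [IsProbabilityMeasure P]
    {S : Type*} [Fintype S] [DecidableEq S] (X : ℕ → Ω → S)
    (hPE : IsPartiallyExchangeableL P X)
    (a : S) (d : ℕ) (hd : 2 ≤ d)
    (p s : List S) (B : Fin (d - 1) → List S)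
    (hp : a ∉ p)
    (hs₁ : s ≠ []) (hs₂ : s.head? = some a) (hs₃ : a ∉ s.tail)
    (hB₁ : ∀ k, B k ≠ []) (hB₂ : ∀ k, (B k).head? = some a) (hB₃ : ∀ k, a ∉ (B k).tail)
    (x : List S) (hx : x = p ++ (List.ofFn B).flatten ++ s)
    (σ : Equiv.Perm (Fin (d - 1))) :
    P (cylinder X x) = P (cylinder X (p ++ (List.ofFn (B ∘ σ)).flatten ++ s)) :=
  partiallyExchangeable_blockPermute_invariant_general P X hPE a d p s B hs₂ hB₂ x hx σ
end

section
/- Let S and O be finite sets, let ((X_t, Y_t))_{t=1}^{T+1} be an exchangeable family of random elements of S × O, let σ : S × O → ℝ be a conformity score function, and assume the scores σ(X_1, Y_1), …, σ(X_{T+1}, Y_{T+1}) are almost surely pairwise distinct. For i ∈ S define q(i) = (1/(T+1)) · (1 + Σ_{t=1}^{T} 1[σ(X_t, Y_t) ≤ σ(i, Y_{T+1})]), and for α ∈ (0,1) define the conformal prediction set C = { i ∈ S : (T+1) q(i) ≤ ⌈(1−α)(T+1)⌉ }. Then P(X_{T+1} ∈ C) = ⌈(1−α)(T+1)⌉ /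 (T+1). -/
open MeasureTheory
open scoped ENNReal

/-- The conformal quantile `q(i)` of candidate state `i`: the fraction
`(1/(T+1)) (1 + Σ_{t=1}^{T} 1[σ(Xₜ, Yₜ) ≤ σ(i, Y_{T+1})])`, where `(XY t) = (Xₜ, Yₜ)` for
`t = 1, …, T+1` (0-indexed as `Fin (T+1)`) and `σc` is the conformity score function. -/
noncomputable def conformalQuantile {Ω S O : Type*} (T : ℕ)
    (XY : Fin (T + 1) → Ω → S × O) (σc : S × O → ℝ) (i : S) (ω : Ω) : ℝ :=
  (1 + ∑ t : Fin T,
      if σc (XY t.castSucc ω) ≤ σc (i, (XY (Fin.last T) ω).2) then (1 : ℝ) else 0) /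
    ((T : ℝ) + 1)

lemma rank_count {n : ℕ} (e : Fin n → ℝ) (he : Function.Injective e)
    (K : ℕ) (hK1 : 1 ≤ K) (hKn : K ≤ n) :
    (Finset.univ.filter fun s : Fin n =>
      (Finset.univ.filter fun t => e t ≤ e s).card ≤ K).card = K := by
  set Rk : Fin n → ℕ := fun s => (Finset.univ.filter fun t => e t ≤ e s).card with hRk
  have hmono : ∀ s s', e s < e s' → Rk s < Rk s' := by
    intro s s' h
    apply Finset.card_lt_card
    constructor
    · intro t ht
      simp only [Finset.mem_filter, Finset.mem_univ, true_and] at ht ⊢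
      exact ht.trans h.le
    · intro hsub
      have h2 := hsub (Finset.mem_filter.mpr ⟨Finset.mem_univ s', le_refl _⟩)
      simp only [Finset.mem_filter, Finset.mem_univ, true_and] at h2
      exact absurd h2 (not_le.mpr h)
  have hinj : Function.Injective Rk := by
    intro s s' h
    by_contra hne
    rcases lt_trichotomy (e s) (e s') with h1 | h1 | h1
    · exact absurd h (Nat.ne_of_lt (hmono _ _ h1))
    · exact hne (he h1)
    · exact absurd h.symm (Nat.ne_of_lt (hmono _ _ h1))
  have himg : Finset.univ.image Rk = Finset.Icc 1 n := by
    apply Finset.eq_of_subset_of_card_le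
    · intro m hm
      simp only [Finset.mem_image] at hm
      obtain ⟨s, -, rfl⟩ := hm
      simp only [Finset.mem_Icc]
      refine ⟨Finset.card_pos.mpr ⟨s, by simp [Rk]⟩, ?_⟩
      exact (Finset.card_filter_le _ _).trans (by simp)
    · rw [Finset.card_image_of_injective _ hinj]
      simp [Nat.card_Icc]
  have hstep : (Finset.univ.filter fun s => Rk s ≤ K).card
      = ((Finset.univ.filter fun s => Rk s ≤ K).image Rk).card :=
    (Finset.card_image_of_injective _ hinj).symm
  rw [hstep]
  have himgf : (Finset.univ.filter fun s => Rk s ≤ K).image Rk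
      = (Finset.univ.image Rk).filter (fun m => m ≤ K) := by
    exact (Finset.filter_image (p := fun m => m ≤ K)).symm
  rw [himgf, himg]
  have : (Finset.Icc 1 n).filter (fun m => m ≤ K) = Finset.Icc 1 K := by
    ext m; simp only [Finset.mem_filter, Finset.mem_Icc]; omega
  rw [this, Nat.card_Icc]
  omega

/-- **Exact coverage of conformal prediction for exchangeable data.**  If the pairs
`(Xₜ, Yₜ)`, `t = 1, …, T+1`, are exchangeable with a.s. pairwise distinct conformity scores,
then the conformal prediction set `C = {i : (T+1) q(i) ≤ ⌈(1−α)(T+1)⌉}` contains `X_{T+1}`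
with probability exactly `⌈(1−α)(T+1)⌉ / (T+1)`. -/
theorem conformal_prediction_exact_coverage
    {Ω : Type*} [MeasurableSpace Ω] (P : Measure Ω) [IsProbabilityMeasure P]
    {S O : Type*} [Fintype S] [Fintype O]
    [MeasurableSpace S] [MeasurableSingletonClass S]
    [MeasurableSpace O] [MeasurableSingletonClass O]
    (T : ℕ) (XY : Fin (T + 1) → Ω → S × O) (hXY : ∀ t, Measurable (XY t))
    (hexch : ∀ π : Equiv.Perm (Fin (T + 1)),
      Measure.map (fun ω (t : Fin (T + 1)) => XY (π t) ω) P =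
        Measure.map (fun ω (t : Fin (T + 1)) => XY t ω) P)
    (σc : S × O → ℝ)
    (hdist : ∀ᵐ ω ∂P, ∀ s t : Fin (T + 1), σc (XY s ω) = σc (XY t ω) → s = t)
    (α : ℝ) (hα : α ∈ Set.Ioo (0 : ℝ) 1) :
    (P {ω | ((T : ℝ) + 1) * conformalQuantile T XY σc ((XY (Fin.last T) ω).1) ω ≤
        (⌈(1 - α) * ((T : ℝ) + 1)⌉ : ℝ)}).toReal =
      (⌈(1 - α) * ((T : ℝ) + 1)⌉ : ℝ) / ((T : ℝ) + 1) := by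
  classical
  obtain ⟨hα0, hα1⟩ := hα
  set k : ℤ := ⌈(1 - α) * ((T : ℝ) + 1)⌉ with hkdef
  have hT1 : (0:ℝ) < (T:ℝ) + 1 := by positivity
  have hk1 : 1 ≤ k := Int.ceil_pos.mpr (by nlinarith)
  have hkT : k ≤ (T:ℤ) + 1 := by
    have h1 : (1 - α) * ((T:ℝ) + 1) ≤ (T:ℝ) + 1 := by nlinarith
    calc k ≤ ⌈((T:ℝ) + 1)⌉ := Int.ceil_le_ceil h1
      _ = (T:ℤ) + 1 := by
          rw [show ((T:ℝ) + 1) = (((T:ℤ) + 1 : ℤ) : ℝ) by push_cast; ring, Int.ceil_intCast]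
  set K : ℕ := k.toNat with hKdef
  have hKk : (K : ℤ) = k := Int.toNat_of_nonneg (by omega)
  have hK1 : 1 ≤ K := by omega
  have hKT : K ≤ T + 1 := by omega
  have hKkR : ((K : ℝ)) = (k : ℝ) := by exact_mod_cast congrArg Int.cast hKk
  -- the vector map and rank sets
  set F : Ω → (Fin (T + 1) → S × O) := fun ω t => XY t ω with hFdef
  set A : Fin (T + 1) → Set (Fin (T + 1) → S × O) := fun s =>
    {v | (Finset.univ.filter fun t => σc (v t) ≤ σc (v s)).card ≤ K} with hAdef
  set E : Fin (T + 1) → Set Ω := fun s => F ⁻¹' A s with hEdef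
  have hF : Measurable F := measurable_pi_lambda _ hXY
  have hA : ∀ s, MeasurableSet (A s) := fun s => (Set.to_countable _).measurableSet
  have hEm : ∀ s, MeasurableSet (E s) := fun s => hF (hA s)
  -- the theorem's set is E (Fin.last T)
  have hset : {ω | ((T : ℝ) + 1) * conformalQuantile T XY σc ((XY (Fin.last T) ω).1) ω ≤
      (k : ℝ)} = E (Fin.last T) := by
    ext ω
    simp only [Set.mem_setOf_eq, hEdef, hAdef, Set.mem_preimage, hFdef]
    have hq : ((T : ℝ) + 1) * conformalQuantile T XY σc ((XY (Fin.last T) ω).1) ω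
        = ((Finset.univ.filter fun t => σc (XY t ω) ≤ σc (XY (Fin.last T) ω)).card : ℝ) := by
      rw [conformalQuantile, mul_div_cancel₀ _ (ne_of_gt hT1)]
      rw [Finset.card_filter]
      push_cast
      rw [Fin.sum_univ_castSucc]
      simp [Prod.mk.eta]
      ring
    rw [hq, ← hKkR]
    exact_mod_cast Iff.rfl
  -- all E s have the same measure
  have hEeq : ∀ s, P (E s) = P (E (Fin.last T)) := by
    intro s
    set π := Equiv.swap s (Fin.last T) with hπ
    have hFπ : Measurable (fun ω (t : Fin (T + 1)) => XY (π t) ω) :=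
      measurable_pi_lambda _ (fun t => hXY (π t))
    have h2 : P ((fun ω (t : Fin (T + 1)) => XY (π t) ω) ⁻¹' A (Fin.last T))
        = P (F ⁻¹' A (Fin.last T)) := by
      rw [← Measure.map_apply hFπ (hA _), ← Measure.map_apply hF (hA _), hexch π]
    have h3 : (fun ω (t : Fin (T + 1)) => XY (π t) ω) ⁻¹' A (Fin.last T) = F ⁻¹' A s := by
      ext ω
      simp only [Set.mem_preimage, hAdef, Set.mem_setOf_eq, hFdef]
      have hc : (Finset.univ.filter fun t => σc (XY (π t) ω) ≤ σc (XY (π (Fin.last T)) ω)).card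
          = (Finset.univ.filter fun t => σc (XY t ω) ≤ σc (XY s ω)).card := by
        rw [hπ, Equiv.swap_apply_right]
        have hmap : (Finset.univ.filter fun t => σc (XY ((Equiv.swap s (Fin.last T)) t) ω) ≤ σc (XY s ω))
            = Finset.map (Equiv.swap s (Fin.last T)).symm.toEmbedding
                (Finset.univ.filter fun t => σc (XY t ω) ≤ σc (XY s ω)) := by
          ext t
          simp [Finset.mem_map_equiv]
        rw [hmap, Finset.card_map]
      rw [hc]
    show P (F ⁻¹' A s) = P (F ⁻¹' A (Fin.last T))
    rw [← h3, h2]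
  -- summing
  have hsum : ∑ s : Fin (T + 1), P (E s) = (K : ℝ≥0∞) := by
    have hind : ∀ s : Fin (T + 1), ∫⁻ ω, (E s).indicator (fun _ => (1:ℝ≥0∞)) ω ∂P = P (E s) := by
      intro s
      rw [lintegral_indicator (hEm s)]
      simp
    calc ∑ s : Fin (T + 1), P (E s)
        = ∑ s : Fin (T + 1), ∫⁻ ω, (E s).indicator (fun _ => (1:ℝ≥0∞)) ω ∂P := by
          simp [hind]
      _ = ∫⁻ ω, ∑ s : Fin (T + 1), (E s).indicator (fun _ => (1:ℝ≥0∞)) ω ∂P :=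
          (lintegral_finset_sum _ (fun s _ => (measurable_one.indicator (hEm s)))).symm
      _ = ∫⁻ _, (K : ℝ≥0∞) ∂P := by
          apply lintegral_congr_ae
          filter_upwards [hdist] with ω hω
          have he : Function.Injective (fun t => σc (XY t ω)) := fun s t h => hω s t h
          have hrc := rank_count (fun t => σc (XY t ω)) he K hK1 hKT
          have hiff : ∀ s : Fin (T + 1), (E s).indicator (fun _ => (1:ℝ≥0∞)) ω
              = if (Finset.univ.filter fun t => σc (XY t ω) ≤ σc (XY s ω)).card ≤ K
                then (1:ℝ≥0∞) else 0 := by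
            intro s
            have hmem : ω ∈ E s ↔
                (Finset.univ.filter fun t => σc (XY t ω) ≤ σc (XY s ω)).card ≤ K := by
              simp only [hEdef, hAdef, hFdef, Set.mem_preimage, Set.mem_setOf_eq]
            rw [Set.indicator_apply]
            by_cases h : (Finset.univ.filter fun t => σc (XY t ω) ≤ σc (XY s ω)).card ≤ K
            · rw [if_pos h, if_pos (hmem.mpr h)]
            · rw [if_neg h, if_neg (fun hh => h (hmem.mp hh))]
          calc ∑ s : Fin (T + 1), (E s).indicator (fun _ => (1:ℝ≥0∞)) ω
              = ∑ s : Fin (T + 1),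
                  if (Finset.univ.filter fun t => σc (XY t ω) ≤ σc (XY s ω)).card ≤ K
                  then (1:ℝ≥0∞) else 0 := Finset.sum_congr rfl (fun s _ => hiff s)
            _ = ((Finset.univ.filter fun s : Fin (T + 1) =>
                  (Finset.univ.filter fun t => σc (XY t ω) ≤ σc (XY s ω)).card ≤ K).card
                    : ℝ≥0∞) := by rw [Finset.sum_boole]
            _ = (K : ℝ≥0∞) := by rw [hrc]
      _ = (K : ℝ≥0∞) := by simp
  have hsum2 : ∑ s : Fin (T + 1), P (E s) = ((T : ℝ≥0∞) + 1) * P (E (Fin.last T)) := by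
    rw [Finset.sum_congr rfl (fun s _ => hEeq s), Finset.sum_const, Finset.card_univ,
      Fintype.card_fin, nsmul_eq_mul]
    push_cast
    ring
  have hPl : P (E (Fin.last T)) = (K : ℝ≥0∞) / ((T : ℝ≥0∞) + 1) := by
    have hne : ((T : ℝ≥0∞) + 1) ≠ 0 := by simp
    have hnt : ((T : ℝ≥0∞) + 1) ≠ ⊤ := by
      simp [ENNReal.add_ne_top]
    rw [ENNReal.eq_div_iff hne hnt]
    rw [← hsum2, hsum]
  rw [hset, hPl, ENNReal.toReal_div, ← hKkR]
  have htr : ((T : ℝ≥0∞) + 1).toReal = (T : ℝ) + 1 := by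
    rw [ENNReal.toReal_add (by simp) (by simp)]
    simp
  rw [htr]
  norm_num
end

section
/- Let S and O be finite sets, let ((X_t, Y_t))_{t=1}^{T+1} be an exchangeable family of random elements of S × O, let σ : S × O → ℝ be a conformity score function, and assume the scores σ(X_1, Y_1), …, σ(X_{T+1}, Y_{T+1}) are almost surely pairwise distinct. For i ∈ S define q(i) = (1/(T+1)) · (1 + Σ_{t=1}^{T} 1[σ(X_t, Y_t) ≤ σ(i, Y_{T+1})]), and for α ∈ (0,1) define the conformal prediction set C = { i ∈ S : (T+1) q(i) ≤ ⌈(1−α)(T+1)⌉ }. Then P(X_{T+1} ∈ C) ≥ 1 − α. -/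
/-! (T+1) q(X_{T+1}) is the rank of the last score among all T+1 scores. Almost surely the
scores are distinct, so the ranks are a permutation of 1, …, T+1 and exactly k of them are at
most k. By exchangeability every position has the same probability of having rank at most k,
hence this probability is k/(T+1), and k = ⌈(1-α)(T+1)⌉ gives the bound 1 - α. -/

open MeasureTheory

open Finset Function
open scoped ENNReal

namespace ConformalPrediction

section Rank

variable {ι β : Type*} [Fintype ι] [LinearOrder β]

def rank (f : ι → β) (j : ι) : ℕ := #{s | f s ≤ f j}

theorem rank_comp_perm (f : ι → β) (π : Equiv.Perm ι) (j : ι) :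
    rank (f ∘ π) j = rank f (π j) :=
  card_equiv π (by simp)

theorem one_le_rank (f : ι → β) (j : ι) : 1 ≤ rank f j :=
  card_pos.2 ⟨j, by simp⟩

theorem rank_le_card (f : ι → β) (j : ι) : rank f j ≤ Fintype.card ι :=
  card_filter_le _ _

theorem rank_lt_rank (f : ι → β) {a b : ι} (h : f a < f b) : rank f a < rank f b :=
  card_lt_card <| (ssubset_iff_of_subset fun s hs => by
    simp only [mem_filter, mem_univ, true_and] at hs ⊢
    exact hs.trans h.le).2 ⟨b, by simp, by simpa using h⟩

theorem rank_injective {f : ι → β} (hf : Injective f) : Injective (rank f) := by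
  intro a b hab
  by_contra hne
  rcases (hf.ne hne).lt_or_gt with h | h
  · exact (rank_lt_rank f h).ne hab
  · exact (rank_lt_rank f h).ne' hab

theorem image_rank {f : ι → β} (hf : Injective f) :
    univ.image (rank f) = Icc 1 (Fintype.card ι) := by
  refine eq_of_subset_of_card_le (fun r hr => ?_) ?_
  · obtain ⟨j, -, rfl⟩ := mem_image.1 hr
    exact mem_Icc.2 ⟨one_le_rank f j, rank_le_card f j⟩
  · rw [card_image_of_injective _ (rank_injective hf)]
    simp

theorem card_rank_le {f : ι → β} (hf : Injective f) (m : ℕ) :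
    #{j | rank f j ≤ m} = min m (Fintype.card ι) := by
  rw [← card_image_of_injective _ (rank_injective hf), ← filter_image (p := (· ≤ m)), image_rank hf]
  have : {r ∈ Icc 1 (Fintype.card ι) | r ≤ m} = Icc 1 (min m (Fintype.card ι)) := by
    ext r
    simp only [mem_filter, mem_Icc]
    omega
  simp [this]

theorem rank_last {n : ℕ} (f : Fin (n + 1) → β) :
    (rank f (Fin.last n) : ℝ) =
      1 + ∑ t : Fin n, if f t.castSucc ≤ f (Fin.last n) then (1 : ℝ) else 0 := by
  rw [rank, natCast_card_filter, Fin.sum_univ_castSucc, add_comm]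
  simp

end Rank

section Exchangeable

variable {Ω ι α : Type*} [MeasurableSpace Ω] [MeasurableSpace α]
  {P : Measure Ω} {X : Ω → ι → α}

theorem measure_preimage_comp_perm (hX : Measurable X)
    (hexch : ∀ π : Equiv.Perm ι, P.map (fun ω => X ω ∘ π) = P.map X)
    (π : Equiv.Perm ι) {B : Set (ι → α)} (hB : MeasurableSet B) :
    P ((fun ω => X ω ∘ π) ⁻¹' B) = P (X ⁻¹' B) := by
  have hXπ : Measurable fun ω => X ω ∘ π :=
    measurable_pi_lambda _ fun t => (measurable_pi_apply (π t)).comp hX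
  rw [← Measure.map_apply hXπ hB, hexch, Measure.map_apply hX hB]

theorem le_card_mul_measure_of_exchangeable [Fintype ι] [IsProbabilityMeasure P]
    (hX : Measurable X) (hexch : ∀ π : Equiv.Perm ι, P.map (fun ω => X ω ∘ π) = P.map X)
    {A : (ι → α) → ι → Prop} [∀ v, DecidablePred (A v)] (hA : ∀ j, MeasurableSet {v | A v j})
    (hA_perm : ∀ (π : Equiv.Perm ι) v j, A (v ∘ π) j ↔ A v (π j))
    {m : ℕ} (hm : ∀ᵐ ω ∂P, m ≤ #{j | A (X ω) j}) (i : ι) :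
    (m : ℝ≥0∞) ≤ Fintype.card ι * P {ω | A (X ω) i} := by
  classical
  have hmeas : ∀ j, MeasurableSet {ω | A (X ω) j} := fun j => hX (hA j)
  have hsame : ∀ j, P {ω | A (X ω) j} = P {ω | A (X ω) i} := fun j =>
    calc P {ω | A (X ω) j} = P ((fun ω => X ω ∘ Equiv.swap i j) ⁻¹' {v | A v i}) := by
          simp only [Set.preimage_ofPred_eq, hA_perm, Equiv.swap_apply_left]
      _ = P {ω | A (X ω) i} := measure_preimage_comp_perm hX hexch _ (hA i)
  have hcount : ∀ ω, (#{j | A (X ω) j} : ℝ≥0∞) = ∑ j, {ω | A (X ω) j}.indicator 1 ω :=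
    fun ω => by
      simp only [natCast_card_filter, Set.indicator_apply, Set.mem_ofPred_eq, Pi.one_apply]
  calc (m : ℝ≥0∞) = ∫⁻ _, (m : ℝ≥0∞) ∂P := by simp
    _ ≤ ∫⁻ ω, (#{j | A (X ω) j} : ℝ≥0∞) ∂P :=
          lintegral_mono_ae (hm.mono fun ω h => by exact_mod_cast h)
    _ = ∑ j, P {ω | A (X ω) j} := by
          simp_rw [hcount]
          rw [lintegral_finsetSum _ fun j _ => measurable_one.indicator (hmeas j)]
          simp_rw [lintegral_indicator_one (hmeas _)]
    _ = Fintype.card ι * P {ω | A (X ω) i} := by simp [hsame]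

end Exchangeable

end ConformalPrediction

open ConformalPrediction

theorem mul_conformalQuantile_eq_rank {Ω S O : Type*} (T : ℕ) (XY : Fin (T + 1) → Ω → S × O)
    (σc : S × O → ℝ) (ω : Ω) :
    ((T : ℝ) + 1) * conformalQuantile T XY σc (XY (Fin.last T) ω).1 ω =
      rank (fun t => σc (XY t ω)) (Fin.last T) := by
  rw [rank_last, conformalQuantile, mul_div_cancel₀ _ (by positivity)]

/-- **Coverage guarantee of conformal prediction for exchangeable data.**  If the pairs
`(Xₜ, Yₜ)`, `t = 1, …, T+1`, are exchangeable with a.s. pairwise distinct conformity scores,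
then the conformal prediction set `C = {i : (T+1) q(i) ≤ ⌈(1−α)(T+1)⌉}` contains `X_{T+1}`
with probability at least `1 - α`. -/
theorem conformal_prediction_coverage
    {Ω : Type*} [MeasurableSpace Ω] (P : Measure Ω) [IsProbabilityMeasure P]
    {S O : Type*} [Fintype S] [Fintype O]
    [MeasurableSpace S] [MeasurableSingletonClass S]
    [MeasurableSpace O] [MeasurableSingletonClass O]
    (T : ℕ) (XY : Fin (T + 1) → Ω → S × O) (hXY : ∀ t, Measurable (XY t))
    (hexch : ∀ π : Equiv.Perm (Fin (T + 1)),
      Measure.map (fun ω (t : Fin (T + 1)) => XY (π t) ω) P =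
        Measure.map (fun ω (t : Fin (T + 1)) => XY t ω) P)
    (σc : S × O → ℝ)
    (hdist : ∀ᵐ ω ∂P, ∀ s t : Fin (T + 1), σc (XY s ω) = σc (XY t ω) → s = t)
    (α : ℝ) (hα : α ∈ Set.Ioo (0 : ℝ) 1) :
    1 - α ≤ (P {ω | ((T : ℝ) + 1) * conformalQuantile T XY σc ((XY (Fin.last T) ω).1) ω ≤
        (⌈(1 - α) * ((T : ℝ) + 1)⌉ : ℝ)}).toReal := by
  obtain ⟨hα0, hα1⟩ := hα
  set k := ⌈(1 - α) * ((T : ℝ) + 1)⌉₊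
  have hk : k ≤ T + 1 := Nat.ceil_le.2 (by push_cast; nlinarith)
  have hevent : {ω | ((T : ℝ) + 1) * conformalQuantile T XY σc ((XY (Fin.last T) ω).1) ω ≤
      (⌈(1 - α) * ((T : ℝ) + 1)⌉ : ℝ)} = {ω | rank (σc ∘ fun t => XY t ω) (Fin.last T) ≤ k} := by
    ext ω
    rw [Set.mem_ofPred_eq, mul_conformalQuantile_eq_rank, ← Int.natCast_ceil_eq_ceil (by nlinarith),
      Int.cast_natCast, Nat.cast_le]
    rfl
  have hcover := le_card_mul_measure_of_exchangeable (measurable_pi_lambda _ hXY) hexch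
    (A := fun v j => rank (σc ∘ v) j ≤ k) (m := k) (fun _ => (Set.toFinite _).measurableSet)
    (fun π v j => by rw [← comp_assoc, rank_comp_perm])
    (hdist.mono fun ω hω => by
      rw [card_rank_le (f := σc ∘ fun t => XY t ω) (fun s t h => hω s t h), Fintype.card_fin,
        min_eq_left hk])
    (Fin.last T)
  rw [hevent]
  have hcover_real := ENNReal.toReal_mono (by finiteness) hcover
  rw [ENNReal.toReal_mul, ENNReal.toReal_natCast, ENNReal.toReal_natCast, Fintype.card_fin,
    Nat.cast_succ] at hcover_real
  nlinarith [Nat.le_ceil ((1 - α) * ((T : ℝ) + 1))]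
end

section
/- Let E be a measurable space, let G be a finite group acting measurably on E, and let Z be a random element of E such that g·Z has the same distribution as Z for every g ∈ G. Let S : E → ℝ be measurable and assume that almost surely the values (S(g·Z))_{g ∈ G} are pairwise distinct. Then for every r ∈ {1, …, |G|}, P( S(Z) = S^{(r)}(Z) ) = 1/|G|, where S^{(r)}(Z) denotes the r-th smallest value of the family (S(g·Z))_{g ∈ G}; that is, the rank of S(Z) within its G-orbit of scores is uniformly distributed on {1, …, |G|}. -/
open MeasureTheory Finset
open scoped ENNReal

/-! Let `rank z = #{g | S (g • z) < S z}`. Where the orbit scores are distinct, `S z` is their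
`r`-th smallest value exactly when `rank z = r - 1`, and for each `k` exactly one `g` has
`rank (g • z) = k`, since `rank (g • z)` is the rank of `S (g • z)` in the same family
`(S (h • z))_h`. By invariance all events `{rank (g • Z) = r - 1}` have the same probability, and
almost surely exactly one of them occurs, so each has probability `1 / |G|`. -/

theorem Finset.card_filter_lt_orderEmbOfFin {α : Type*} [LinearOrder α] (s : Finset α) {n : ℕ}
    (h : #s = n) (i : Fin n) : #{x ∈ s | x < s.orderEmbOfFin h i} = i := by
  set e := s.orderEmbOfFin h
  have hs : s = univ.image e := (s.image_orderEmbOfFin_univ h).symm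
  rw [hs, filter_image, card_image_of_injective _ e.injective]
  simp only [OrderEmbedding.lt_iff_lt, filter_gt_eq_Iio, Fin.card_Iio]

theorem Fintype.card_filter_lt_eq_iff_getD_sort_eq {ι α : Type*} [Fintype ι] [LinearOrder α]
    {v : ι → α} (hv : Function.Injective v) {k : ℕ} (hk : k < Fintype.card ι) (d : α) (i : ι) :
    #{j | v j < v i} = k ↔ ((univ.val.map v).sort (· ≤ ·)).getD k d = v i := by
  set s := univ.map ⟨v, hv⟩
  have hs : #s = Fintype.card ι := by simp [s]
  have hsort : (univ.val.map v).sort (· ≤ ·) = s.sort (· ≤ ·) := by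
    rw [← sort_val]; rfl
  obtain ⟨j, hj⟩ : ∃ j, s.orderEmbOfFin hs j = v i := by
    rw [← Set.mem_range, range_orderEmbOfFin]; simp [s]
  have hrank : #{j' | v j' < v i} = j := by
    rw [← s.card_filter_lt_orderEmbOfFin hs j, hj, filter_map, card_map]; rfl
  have hget : (s.sort (· ≤ ·)).getD k d = s.orderEmbOfFin hs ⟨k, hk⟩ := by
    rw [List.getD_eq_getElem _ _ (by rwa [length_sort, hs])]; rfl
  rw [hrank, hsort, hget, ← hj, (s.orderEmbOfFin hs).injective.eq_iff, Fin.ext_iff, eq_comm]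

theorem Fintype.existsUnique_card_filter_lt_eq {ι α : Type*} [Fintype ι] [LinearOrder α]
    {v : ι → α} (hv : Function.Injective v) {k : ℕ} (hk : k < Fintype.card ι) :
    ∃! i, #{j | v j < v i} = k := by
  obtain ⟨i₀⟩ : Nonempty ι := Fintype.card_pos_iff.mp (by omega)
  set l := (univ.val.map v).sort (· ≤ ·)
  have hl : k < l.length := by simpa [l] using hk
  obtain ⟨i, -, hi⟩ := Multiset.mem_map.1 ((Multiset.mem_sort _).1 (List.getElem_mem hl))
  have hrank : ∀ j, #{j' | v j' < v j} = k ↔ v j = l[k] := fun j => by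
    rw [card_filter_lt_eq_iff_getD_sort_eq hv hk (v i₀), List.getD_eq_getElem _ _ hl, eq_comm]
  exact ⟨i, (hrank i).2 hi, fun j hj => hv (((hrank j).1 hj).trans hi.symm)⟩

section OrbitRank

variable {G E α : Type*} [Group G] [Fintype G] [MulAction G E] [LinearOrder α]

variable (G) in
def orbitRank (S : E → α) (z : E) : ℕ := #{g : G | S (g • z) < S z}

theorem orbitRank_smul (S : E → α) (g : G) (z : E) :
    orbitRank G S (g • z) = #{h : G | S (h • z) < S (g • z)} :=
  card_equiv (Equiv.mulRight g) (by simp [smul_smul])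

theorem measurable_orbitRank [TopologicalSpace α] [OrderClosedTopology α]
    [SecondCountableTopology α] [MeasurableSpace α] [OpensMeasurableSpace α] [MeasurableSpace E]
    (hact : ∀ g : G, Measurable fun z : E => g • z) {S : E → α} (hS : Measurable S) :
    Measurable (orbitRank G S) := by
  unfold orbitRank
  simp only [card_filter]
  exact Finset.measurable_sum _ fun g _ =>
    Measurable.ite (measurableSet_lt (hS.comp (hact g)) hS) measurable_const measurable_const

end OrbitRank

theorem MeasureTheory.sum_measure_eq_of_ae_existsUnique {Ω ι : Type*} [MeasurableSpace Ω]
    [Fintype ι] {μ : Measure Ω} {C : ι → Set Ω} (hC : ∀ i, MeasurableSet (C i))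
    (h : ∀ᵐ ω ∂μ, ∃! i, ω ∈ C i) : ∑ i, μ (C i) = μ Set.univ := by
  have hone : (fun ω => ∑ i, (C i).indicator (1 : Ω → ℝ≥0∞) ω) =ᵐ[μ] 1 := by
    filter_upwards [h] with ω ⟨i, hi, huniq⟩
    rw [sum_eq_single i (fun j _ hj => Set.indicator_of_notMem (fun hj' => hj (huniq j hj')) _)
      (by simp), Set.indicator_of_mem hi]
  calc ∑ i, μ (C i) = ∑ i, ∫⁻ ω, (C i).indicator (1 : Ω → ℝ≥0∞) ω ∂μ := by
        simp only [lintegral_indicator_one (hC _)]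
    _ = ∫⁻ ω, ∑ i, (C i).indicator (1 : Ω → ℝ≥0∞) ω ∂μ :=
        (lintegral_finsetSum _ fun i _ => measurable_one.indicator (hC i)).symm
    _ = μ Set.univ := by rw [lintegral_congr_ae hone]; simp

/-- For a finite group `G` acting measurably on `E`, a random element `Z` whose law is
invariant under the action, and a measurable score `S` whose values over the orbit of `Z`
are a.s. pairwise distinct, the rank of `S(Z)` within the orbit scores `(S(g•Z))_{g ∈ G}`
is uniform: for every `r ∈ {1, …, |G|}`, the probability that `S(Z)` equals the `r`-th
smallest orbit score is `1/|G|`. -/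
theorem rank_within_orbit_uniform
    {E : Type*} [MeasurableSpace E] {G : Type*} [Group G] [Fintype G] [MulAction G E]
    (hact : ∀ g : G, Measurable fun z : E => g • z)
    {Ω : Type*} [MeasurableSpace Ω] (P : Measure Ω) [IsProbabilityMeasure P]
    (Z : Ω → E) (hZ : Measurable Z)
    (hinv : ∀ g : G, Measure.map (fun ω => g • Z ω) P = Measure.map Z P)
    (S : E → ℝ) (hS : Measurable S)
    (hdist : ∀ᵐ ω ∂P, ∀ g g' : G, S (g • Z ω) = S (g' • Z ω) → g = g') :
    ∀ r : ℕ, 1 ≤ r → r ≤ Fintype.card G →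
      (P {ω | S (Z ω) =
          ((Multiset.map (fun g : G => S (g • Z ω)) Finset.univ.val).sort (· ≤ ·)).getD
            (r - 1) 0}).toReal = 1 / (Fintype.card G : ℝ) := by
  intro r hr1 hr2
  have hk : r - 1 < Fintype.card G := by omega
  set A := orbitRank G S ⁻¹' {r - 1}
  have hA : MeasurableSet A := measurable_orbitRank hact hS (measurableSet_singleton _)
  have hevent : {ω | S (Z ω) = ((Multiset.map (fun g : G => S (g • Z ω)) univ.val).sort
      (· ≤ ·)).getD (r - 1) 0} =ᵐ[P] Z ⁻¹' A := by
    filter_upwards [hdist] with ω hω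
    have := Fintype.card_filter_lt_eq_iff_getD_sort_eq hω hk 0 1
    rw [one_smul] at this
    exact propext (eq_comm.trans this.symm)
  have hpartition : ∀ᵐ ω ∂P, ∃! g : G, ω ∈ (fun ω => g • Z ω) ⁻¹' A := by
    filter_upwards [hdist] with ω hω
    simpa [A, orbitRank_smul] using Fintype.existsUnique_card_filter_lt_eq hω hk
  have hgZ (g : G) : Measurable fun ω => g • Z ω := (hact g).comp hZ
  have hequiprobable (g : G) : P ((fun ω => g • Z ω) ⁻¹' A) = P (Z ⁻¹' A) := by
    rw [← Measure.map_apply (hgZ g) hA, hinv g, Measure.map_apply hZ hA]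
  have hsum := sum_measure_eq_of_ae_existsUnique (fun g => hgZ g hA) hpartition
  simp only [hequiprobable, sum_const, card_univ, nsmul_eq_mul, measure_univ] at hsum
  rw [measure_congr hevent, ENNReal.eq_inv_of_mul_eq_one_left ((mul_comm _ _).trans hsum),
    ENNReal.toReal_inv, ENNReal.toReal_natCast, one_div]
end

section
/- Let S and O be finite sets, (x₀, y₀) ∈ S × O, and let μ be a probability measure on pairs (P, B) where P is a row-stochastic S × S matrix and B is a row-stochastic S × O matrix. Suppose ((X_t, Y_t))_{t ≥ 1} is a process with values in S × O such that (X₁, Y₁) = (x₀, y₀) almost surely and, for every T ≥ 1 and every (x, y) ∈ S^T × O^T with (x₁, y₁) = (x₀, y₀), P((X_t, Y_t) = (x_t, y_t) for 1 ≤ t ≤ T) = ∫ ∏_{t=1}^{T-1} P_{x_t x_{t+1}} B_{x_{t+1} y_{t+1}} dμ(P, B). Then the augmented process ((X_t, Y_t))_{t ≥ 1} is a mixture of Markov chains on the finite set S × O, with the matrix Q^{(P,B)} given by Q^{(P,B)}_{(i,j),(k,l)} = P_{ik} B_{kl} being row-stochastic; consequently the augmented process is partially exchangeable as a process on S × O.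 -/
open MeasureTheory

/-- A row-stochastic matrix with real entries (rows indexed by `S`, columns by `T`). -/
def IsRowStochastic {S T : Type*} [Fintype T] (M : S → T → ℝ) : Prop :=
  (∀ i j, 0 ≤ M i j) ∧ ∀ i, ∑ j, M i j = 1

/-- The number of transitions from `u` to `v` among the first `T` entries of the
sequence `z`. -/
def transCount {A : Type*} [DecidableEq A] (T : ℕ) (z : ℕ → A) (u v : A) : ℕ :=
  ∑ t ∈ Finset.range (T - 1), if z t = u ∧ z (t + 1) = v then 1 else 0

/-- The process `Z` (under the probability measure `P`), started at `z₀`, is a mixture of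
Markov chains on the finite set `A`. -/
def IsMixtureOfMarkovChains {Ω : Type*} [MeasurableSpace Ω] (P : Measure Ω)
    {A : Type*} [Fintype A] (Z : ℕ → Ω → A) (z₀ : A) : Prop :=
  ∃ ν : Measure {Q : A → A → ℝ // IsRowStochastic Q},
    IsProbabilityMeasure ν ∧
      ∀ T : ℕ, 1 ≤ T → ∀ z : ℕ → A, z 0 = z₀ →
        (P {ω | ∀ t < T, Z t ω = z t}).toReal =
          ∫ Q', ∏ t ∈ Finset.range (T - 1), Q'.val (z t) (z (t + 1)) ∂ν

/-- The process `Z` (under the probability measure `P`) is partially exchangeable. -/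
def IsPartiallyExchangeable {Ω : Type*} [MeasurableSpace Ω] (P : Measure Ω)
    {A : Type*} [DecidableEq A] (Z : ℕ → Ω → A) : Prop :=
  ∀ T : ℕ, 1 ≤ T → ∀ z z' : ℕ → A, z 0 = z' 0 →
    (∀ u v : A, transCount T z u v = transCount T z' u v) →
    P {ω | ∀ t < T, Z t ω = z t} = P {ω | ∀ t < T, Z t ω = z' t}

/-! Under the parameters `(P, B)` the pair `(Xₜ, Yₜ)` moves from `(i, j)` to `(k, l)` with
probability `P i k * B k l`, independently of `j`. So the image of the mixing measure under
`(P, B) ↦ augmentedMatrix P B` exhibits the pair process as a mixture of Markov chains. Under a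
single Markov chain the probability of a path is a product of transition probabilities, hence a
function of the path's transition counts; integrating, the same holds for any mixture. -/

def augmentedMatrix {S O : Type*} (Pm : S → S → ℝ) (Bm : S → O → ℝ) :
    S × O → S × O → ℝ :=
  fun p q => Pm p.1 q.1 * Bm q.1 q.2

theorem isRowStochastic_augmentedMatrix {S O : Type*} [Fintype S] [Fintype O]
    {Pm : S → S → ℝ} {Bm : S → O → ℝ} (hP : IsRowStochastic Pm) (hB : IsRowStochastic Bm) :
    IsRowStochastic (augmentedMatrix Pm Bm) := by
  refine ⟨fun p q => mul_nonneg (hP.1 _ _) (hB.1 _ _), fun p => ?_⟩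
  calc ∑ q, augmentedMatrix Pm Bm p q = ∑ k, Pm p.1 k * ∑ l, Bm k l := by
        simp only [augmentedMatrix, Fintype.sum_prod_type, Finset.mul_sum]
    _ = 1 := by simp only [hB.2, mul_one, hP.2]

theorem measurable_augmentedMatrix {S O : Type*} :
    Measurable fun PB : (S → S → ℝ) × (S → O → ℝ) => augmentedMatrix PB.1 PB.2 := by
  unfold augmentedMatrix
  fun_prop

theorem prod_transitions_eq_prod_pow_transCount {A M : Type*} [DecidableEq A] [Fintype A]
    [CommMonoid M] (T : ℕ) (z : ℕ → A) (Q : A → A → M) :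
    ∏ t ∈ Finset.range (T - 1), Q (z t) (z (t + 1)) =
      ∏ p : A × A, Q p.1 p.2 ^ transCount T z p.1 p.2 := by
  rw [← Finset.prod_fiberwise' _ (fun t => (z t, z (t + 1))) fun p => Q p.1 p.2]
  refine Finset.prod_congr rfl fun p _ => ?_
  simp only [Finset.prod_const, transCount, Finset.card_filter, Prod.ext_iff]

theorem IsMixtureOfMarkovChains.isPartiallyExchangeable {Ω : Type*} [MeasurableSpace Ω]
    {P : Measure Ω} [IsFiniteMeasure P] {A : Type*} [Fintype A] [DecidableEq A]
    {Z : ℕ → Ω → A} {z₀ : A} (h : IsMixtureOfMarkovChains P Z z₀)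
    (hstart : ∀ᵐ ω ∂P, Z 0 ω = z₀) : IsPartiallyExchangeable P Z := by
  obtain ⟨ν, -, hν⟩ := h
  intro T hT z z' h0 hcount
  by_cases hz : z 0 = z₀
  · refine (ENNReal.toReal_eq_toReal_iff' (measure_ne_top P _) (measure_ne_top P _)).mp ?_
    rw [hν T hT z hz, hν T hT z' (h0 ▸ hz)]
    refine integral_congr_ae (Filter.Eventually.of_forall fun Q => ?_)
    simp only [prod_transitions_eq_prod_pow_transCount, hcount]
  · have hnull : ∀ w : ℕ → A, w 0 ≠ z₀ → P {ω | ∀ t < T, Z t ω = w t} = 0 := fun w hw =>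
      measure_mono_null (fun ω hω hω₀ => hw (hω 0 hT ▸ hω₀)) (ae_iff.mp hstart)
    rw [hnull z hz, hnull z' (h0 ▸ hz)]

def IsMixtureOfHiddenMarkovModels {Ω : Type*} [MeasurableSpace Ω] (P : Measure Ω)
    {S O : Type*} [Fintype S] [Fintype O] (X : ℕ → Ω → S) (Y : ℕ → Ω → O) (x₀ : S) (y₀ : O)
    (μ : Measure {PB : (S → S → ℝ) × (S → O → ℝ) //
        IsRowStochastic PB.1 ∧ IsRowStochastic PB.2}) : Prop :=
  ∀ T : ℕ, 1 ≤ T → ∀ (x : ℕ → S) (y : ℕ → O), x 0 = x₀ → y 0 = y₀ →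
    (P {ω | ∀ t < T, X t ω = x t ∧ Y t ω = y t}).toReal =
      ∫ PB, ∏ t ∈ Finset.range (T - 1),
        PB.val.1 (x t) (x (t + 1)) * PB.val.2 (x (t + 1)) (y (t + 1)) ∂μ

theorem IsMixtureOfHiddenMarkovModels.isMixtureOfMarkovChains {Ω : Type*} [MeasurableSpace Ω]
    {P : Measure Ω} {S O : Type*} [Fintype S] [Fintype O] {X : ℕ → Ω → S} {Y : ℕ → Ω → O}
    {x₀ : S} {y₀ : O}
    {μ : Measure {PB : (S → S → ℝ) × (S → O → ℝ) //
        IsRowStochastic PB.1 ∧ IsRowStochastic PB.2}} [IsProbabilityMeasure μ]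
    (h : IsMixtureOfHiddenMarkovModels P X Y x₀ y₀ μ) :
    IsMixtureOfMarkovChains P (fun t ω => (X t ω, Y t ω)) (x₀, y₀) := by
  let toAugmented (PB : {PB : (S → S → ℝ) × (S → O → ℝ) //
      IsRowStochastic PB.1 ∧ IsRowStochastic PB.2}) :
      {Q : S × O → S × O → ℝ // IsRowStochastic Q} :=
    ⟨augmentedMatrix PB.1.1 PB.1.2, isRowStochastic_augmentedMatrix PB.2.1 PB.2.2⟩
  have hmeas : Measurable toAugmented :=
    (measurable_augmentedMatrix.comp measurable_subtype_coe).subtype_mk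
  refine ⟨μ.map toAugmented, Measure.isProbabilityMeasure_map hmeas.aemeasurable, ?_⟩
  intro T hT z hz
  have hintegrand : Measurable fun Q : {Q : S × O → S × O → ℝ // IsRowStochastic Q} =>
      ∏ t ∈ Finset.range (T - 1), Q.val (z t) (z (t + 1)) :=
    Finset.measurable_prod _ fun t _ =>
      (measurable_pi_apply _).comp ((measurable_pi_apply _).comp measurable_subtype_coe)
  have hevent : {ω | ∀ t < T, (X t ω, Y t ω) = z t} =
      {ω | ∀ t < T, X t ω = (z t).1 ∧ Y t ω = (z t).2} := by
    simp only [Prod.ext_iff]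
  rw [integral_map hmeas.aemeasurable hintegrand.aestronglyMeasurable, hevent,
    h T hT _ _ (congrArg Prod.fst hz) (congrArg Prod.snd hz)]
  rfl

/-- If the joint process `(Xₜ, Yₜ)` is a mixture of hidden Markov models with mixing
measure `μ` over pairs `(P, B)` of a row-stochastic transition matrix and a row-stochastic
observation matrix, then the matrices `Q^{(P,B)}_{(i,j),(k,l)} = P_{ik} B_{kl}` are
row-stochastic, and the augmented process `(Xₜ, Yₜ)` is a mixture of Markov chains on
`S × O`; consequently it is partially exchangeable. -/
theorem augmented_process_mixture_of_markov
    {Ω : Type*} [MeasurableSpace Ω] (P : Measure Ω) [IsProbabilityMeasure P]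
    {S O : Type*} [Fintype S] [Fintype O] [DecidableEq S] [DecidableEq O]
    (X : ℕ → Ω → S) (Y : ℕ → Ω → O) (x₀ : S) (y₀ : O)
    (μ : Measure {PB : (S → S → ℝ) × (S → O → ℝ) //
        IsRowStochastic PB.1 ∧ IsRowStochastic PB.2})
    [IsProbabilityMeasure μ]
    (hinit : ∀ᵐ ω ∂P, X 0 ω = x₀ ∧ Y 0 ω = y₀)
    (hmix : ∀ T : ℕ, 1 ≤ T → ∀ (x : ℕ → S) (y : ℕ → O), x 0 = x₀ → y 0 = y₀ →
      (P {ω | ∀ t < T, X t ω = x t ∧ Y t ω = y t}).toReal =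
        ∫ PB, ∏ t ∈ Finset.range (T - 1),
          PB.val.1 (x t) (x (t + 1)) * PB.val.2 (x (t + 1)) (y (t + 1)) ∂μ) :
    (∀ (Pm : S → S → ℝ) (Bm : S → O → ℝ), IsRowStochastic Pm → IsRowStochastic Bm →
        IsRowStochastic fun p q : S × O => Pm p.1 q.1 * Bm q.1 q.2) ∧
      IsMixtureOfMarkovChains P (fun t ω => (X t ω, Y t ω)) (x₀, y₀) ∧
      IsPartiallyExchangeable P fun t ω => (X t ω, Y t ω) := by
  have hQ := IsMixtureOfHiddenMarkovModels.isMixtureOfMarkovChains hmix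
  refine ⟨fun _ _ hP hB => isRowStochastic_augmentedMatrix hP hB, hQ,
    hQ.isPartiallyExchangeable ?_⟩
  filter_upwards [hinit] with ω hω
  rw [hω.1, hω.2]
end

section
/- Let A be a finite set, a ∈ A, N ≥ 1, and let Z be a random element of A^N whose law is invariant under a-block permutations: for every z ∈ A^N in which a occurs at least twice and every permutation σ of the a-blocks of z, P(Z = z) = P(Z = σ·z). Assume a occurs at least twice in Z almost surely, let d(z) denote the number of a-blocks of z, and for each integer d ≥ 1 fix a subgroup Π_d of the symmetric group on d elements. Let S : A^N → ℝ be any function such that almost surely the values { S(π·Z) : π ∈ Π_{d(Z)} } are pairwise distinct, and define q(Z) = (1/|Π_{d(Z)}|) · Σ_{π ∈ Π_{d(Z)}} 1{ S(π·Z) ≥ S(Z) }. Then for every α ∈ (0,1): (i) P( q(Z) > α ) ≥ 1 − α; and (ii) if additionally there is an integer m ≥ 1 with |Π_{d(Z)}| ≥ m almost surely, then P( q(Z) > α ) ≤ 1 − α + 1/m. -/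
open MeasureTheory

variable {A : Type*} [DecidableEq A]

/-- Split a list (assumed to begin with `a`) into its maximal segments each beginning
with `a` and containing no further `a`. -/
def aSegments (a : A) : List A → List (List A)
  | [] => []
  | x :: xs =>
    (x :: xs.takeWhile (· ≠ a)) :: aSegments a (xs.dropWhile (· ≠ a))
  termination_by l => l.length
  decreasing_by
    simp only [List.length_cons]
    exact Nat.lt_succ_of_le (List.dropWhile_sublist _).length_le

/-- The number of `a`-blocks of `z`: if `a` occurs `d` times in `z`, the `a`-blocks are the
segments between consecutive occurrences of `a`, of which there are `d - 1`. -/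
def numABlocks (a : A) (z : List A) : ℕ := z.count a - 1

/-- The `a`-block permutation of `z` by `σ`: the prefix before the first occurrence of `a`
and the suffix starting at the last occurrence of `a` are kept fixed, and the `a`-blocks in
between are concatenated in the order prescribed by `σ`. -/
def blockPermute (a : A) (z : List A) (σ : Equiv.Perm (Fin (numABlocks a z))) : List A :=
  z.takeWhile (· ≠ a) ++
    (List.ofFn fun k : Fin (numABlocks a z) =>
        (aSegments a (z.dropWhile (· ≠ a))).getD (σ k).val []).flatten ++
    (aSegments a (z.dropWhile (· ≠ a))).getD (numABlocks a z) []

/-!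
Fix the number `d` of `a`-blocks. On the lists with `d` blocks, `σ • z := blockPermute a z σ⁻¹`
is an action of `Equiv.Perm (Fin d)`, and the law of `Z` is invariant under it. Whenever a finite
group `G` acts on a set carrying an invariant weight, averaging over `G` shows that the event
`q ≤ α` has weight exactly `⌊α |G|⌋ / |G|`: along an orbit with distinct scores,
`|G| q(g • x)` is the rank of `g • x` among the scores, and exactly `⌊α |G|⌋` ranks are at most
`α |G|`. Summing over `d` gives `P(q(Z) ≤ α) = E[⌊α n⌋ / n]` with `n = |Π_{d(Z)}|`, and
`α - 1/n ≤ ⌊α n⌋ / n ≤ α`.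
-/

open scoped ENNReal

section Randomization

open Finset

theorem card_filter_card_filter_le_eq_of_injective {ι β : Type*} [Fintype ι] [LinearOrder β]
    {f : ι → β} (hf : Function.Injective f) {K : ℕ} (hK : K ≤ Fintype.card ι) :
    #{i | #{j | f i ≤ f j} ≤ K} = K := by
  set r : ι → ℕ := fun i => #{j | f i ≤ f j}
  have hr_lt (i j : ι) (hij : f i < f j) : r j < r i := by
    refine card_lt_card ⟨monotone_filter_right _ fun _ _ => hij.le.trans, fun h => ?_⟩
    exact hij.not_ge (by simpa using h (by simp : i ∈ ({k | f i ≤ f k} : Finset ι)))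
  have hr_inj : Function.Injective r := fun i j hrij => hf <|
    le_antisymm (not_lt.mp fun h => (hr_lt j i h).ne hrij) (not_lt.mp fun h => (hr_lt i j h).ne' hrij)
  have himage : univ.image r = Icc 1 (Fintype.card ι) := by
    refine eq_of_subset_of_card_le (fun k hk => ?_) ?_
    · obtain ⟨i, -, rfl⟩ := mem_image.mp hk
      exact mem_Icc.mpr ⟨card_pos.mpr ⟨i, by simp⟩, (card_filter_le _ _).trans_eq card_univ⟩
    · rw [card_image_of_injective _ hr_inj, card_univ, Nat.card_Icc, Nat.add_sub_cancel]
  calc #{i | r i ≤ K} = #{k ∈ univ.image r | k ≤ K} := by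
        rw [filter_image, card_image_of_injective _ hr_inj]
    _ = #(Icc 1 K) := by
        rw [himage]
        congr 1
        ext k
        simp only [mem_filter, mem_Icc]
        omega
    _ = K := by simp

variable (G : Type*) {X : Type*} [Group G] [Fintype G] [MulAction G X]

noncomputable def randQuantile (s : X → ℝ) (x : X) : ℝ :=
  (#{g : G | s x ≤ s (g • x)} : ℝ) / Fintype.card G

theorem randQuantile_smul (s : X → ℝ) (g : G) (x : X) :
    randQuantile G s (g • x) = (#{h : G | s (g • x) ≤ s (h • x)} : ℝ) / Fintype.card G := by
  rw [randQuantile, card_equiv (Equiv.mulRight g) (t := {h : G | s (g • x) ≤ s (h • x)})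
    (by simp [mul_smul])]

theorem card_randQuantile_smul_le {s : X → ℝ} {x : X}
    (hs : Function.Injective fun g : G => s (g • x)) {α : ℝ} (hα₀ : 0 ≤ α) (hα₁ : α < 1) :
    #{g : G | randQuantile G s (g • x) ≤ α} = ⌊α * Fintype.card G⌋₊ := by
  have hn : (0 : ℝ) < Fintype.card G := by exact_mod_cast Fintype.card_pos
  have hle (g : G) : randQuantile G s (g • x) ≤ α ↔
      #{h : G | s (g • x) ≤ s (h • x)} ≤ ⌊α * Fintype.card G⌋₊ := by
    rw [randQuantile_smul, div_le_iff₀ hn, Nat.le_floor_iff (by positivity)]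
  simp_rw [hle]
  exact card_filter_card_filter_le_eq_of_injective hs
    (Nat.floor_le_of_le (mul_le_of_le_one_left hn.le hα₁.le))

theorem card_mul_tsum_eq_tsum_sum_smul (f : X → ℝ≥0∞) :
    Fintype.card G * ∑' x, f x = ∑' x, ∑ g : G, f (g • x) := by
  have hsmul (g : G) : ∑' x, f (g • x) = ∑' x, f x := (MulAction.toPerm g).tsum_eq f
  rw [Summable.tsum_finsetSum fun _ _ => ENNReal.summable]
  simp [hsmul]

theorem tsum_ite_randQuantile_le (p : X → ℝ≥0∞) (hp : ∀ (g : G) x, p (g • x) = p x)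
    (s : X → ℝ) (hs : ∀ x, p x ≠ 0 → Function.Injective fun g : G => s (g • x)) {α : ℝ}
    (hα₀ : 0 ≤ α) (hα₁ : α < 1) :
    ∑' x, (if randQuantile G s x ≤ α then p x else 0) =
      ENNReal.ofReal (⌊α * Fintype.card G⌋₊ / Fintype.card G) * ∑' x, p x := by
  have hn : (Fintype.card G : ℝ≥0∞) ≠ 0 := by exact_mod_cast Fintype.card_ne_zero
  have hcount (x : X) : ∑ g : G, (if randQuantile G s (g • x) ≤ α then p (g • x) else 0) =
      ⌊α * Fintype.card G⌋₊ * p x := by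
    by_cases hx : p x = 0
    · simp [hp, hx]
    · rw [← card_randQuantile_smul_le G (hs x hx) hα₀ hα₁]
      simp [hp, sum_ite]
  rw [← ENNReal.mul_right_inj hn (ENNReal.natCast_ne_top _), card_mul_tsum_eq_tsum_sum_smul,
    tsum_congr hcount, ENNReal.tsum_mul_left, ← mul_assoc,
    ENNReal.ofReal_div_of_pos (by positivity), ENNReal.ofReal_natCast, ENNReal.ofReal_natCast,
    ENNReal.mul_div_cancel hn (ENNReal.natCast_ne_top _)]

end Randomization

section ABlocks

open List

def IsABlock {α : Type*} (a : α) (s : List α) : Prop := ∃ t, s = a :: t ∧ a ∉ t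

theorem flatten_aSegments (a : A) (l : List A) : (aSegments a l).flatten = l := by
  induction l using aSegments.induct a with
  | case1 => simp [aSegments]
  | case2 x xs ih => rw [aSegments.eq_2, flatten_cons, ih, cons_append, takeWhile_append_dropWhile]

theorem notMem_takeWhile_ne (a : A) (l : List A) : a ∉ l.takeWhile (· ≠ a) :=
  fun h => by simpa using mem_takeWhile_imp h

theorem head?_dropWhile_ne (a : A) (l : List A) : ∀ x ∈ (l.dropWhile (· ≠ a)).head?, x = a := by
  intro x hx
  have := head?_dropWhile_not (· ≠ a) l
  rw [Option.mem_def.mp hx] at this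
  simpa using this

theorem isABlock_of_mem_aSegments {a : A} {l : List A} (hl : ∀ x ∈ l.head?, x = a)
    {s : List A} (hs : s ∈ aSegments a l) : IsABlock a s := by
  induction l using aSegments.induct a with
  | case1 => simp [aSegments] at hs
  | case2 x xs ih =>
    obtain rfl : x = a := hl x rfl
    rw [aSegments.eq_2, mem_cons] at hs
    rcases hs with rfl | hs
    · exact ⟨_, rfl, notMem_takeWhile_ne x xs⟩
    · exact ih (head?_dropWhile_ne x xs) hs

theorem head?_flatten_of_isABlock {α : Type*} {a : α} {L : List (List α)}
    (hL : ∀ s ∈ L, IsABlock a s) : ∀ x ∈ L.flatten.head?, x = a := by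
  rcases L with _ | ⟨s, L⟩
  · simp
  · obtain ⟨t, rfl, -⟩ := hL s mem_cons_self
    simp

theorem takeWhile_append_flatten {a : A} {pre : List A} {L : List (List A)} (ha : a ∉ pre)
    (hL : ∀ s ∈ L, IsABlock a s) : (pre ++ L.flatten).takeWhile (· ≠ a) = pre := by
  rw [takeWhile_append_of_pos fun x hx => by simpa using ne_of_mem_of_not_mem hx ha]
  rcases h : L.flatten with _ | ⟨x, l⟩
  · simp
  · obtain rfl := head?_flatten_of_isABlock hL x (by simp [h])
    simp

theorem dropWhile_append_flatten {a : A} {pre : List A} {L : List (List A)} (ha : a ∉ pre)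
    (hL : ∀ s ∈ L, IsABlock a s) : (pre ++ L.flatten).dropWhile (· ≠ a) = L.flatten := by
  rw [dropWhile_append_of_pos fun x hx => by simpa using ne_of_mem_of_not_mem hx ha]
  rcases h : L.flatten with _ | ⟨x, l⟩
  · simp
  · obtain rfl := head?_flatten_of_isABlock hL x (by simp [h])
    simp

theorem aSegments_flatten {a : A} {L : List (List A)} (hL : ∀ s ∈ L, IsABlock a s) :
    aSegments a L.flatten = L := by
  induction L with
  | nil => simp [aSegments]
  | cons s L ih =>
    obtain ⟨t, rfl, ht⟩ := hL s mem_cons_self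
    have hL' : ∀ s ∈ L, IsABlock a s := fun s hs => hL s (mem_cons_of_mem _ hs)
    rw [flatten_cons, cons_append, aSegments.eq_2, takeWhile_append_flatten ht hL',
      dropWhile_append_flatten ht hL', ih hL']

theorem count_flatten_of_isABlock {a : A} {L : List (List A)} (hL : ∀ s ∈ L, IsABlock a s) :
    L.flatten.count a = L.length := by
  rw [count_flatten, map_congr_left (g := fun _ => 1), map_const', sum_replicate, smul_eq_mul,
    mul_one]
  intro s hs
  obtain ⟨t, rfl, ht⟩ := hL s hs
  simp [count_eq_zero.mpr ht]

/-- The `a`-blocks of `z` followed by the suffix of `z` starting at its last `a`. -/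
def aBlocks (a : A) (z : List A) : List (List A) := aSegments a (z.dropWhile (· ≠ a))

theorem isABlock_of_mem_aBlocks {a : A} {z s : List A} (hs : s ∈ aBlocks a z) : IsABlock a s :=
  isABlock_of_mem_aSegments (head?_dropWhile_ne a z) hs

theorem takeWhile_append_flatten_aBlocks (a : A) (z : List A) :
    z.takeWhile (· ≠ a) ++ (aBlocks a z).flatten = z := by
  rw [aBlocks, flatten_aSegments, takeWhile_append_dropWhile]

theorem length_aBlocks (a : A) (z : List A) : (aBlocks a z).length = z.count a := by
  conv_rhs => rw [← takeWhile_append_flatten_aBlocks a z]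
  rw [count_append, count_eq_zero.mpr (notMem_takeWhile_ne a z),
    count_flatten_of_isABlock fun _ => isABlock_of_mem_aBlocks, zero_add]

theorem length_aBlocks_of_mem {a : A} {z : List A} (h : a ∈ z) :
    (aBlocks a z).length = numABlocks a z + 1 := by
  rw [length_aBlocks, numABlocks, Nat.sub_add_cancel (count_pos_iff.mpr h)]

def reorderBlocks {α : Type*} (L : List (List α)) (d : ℕ) (σ : Equiv.Perm (Fin d)) :
    List (List α) :=
  List.ofFn (fun k => L.getD (σ k) []) ++ [L.getD d []]

section Reorder

variable {α : Type*} {L : List (List α)} {d : ℕ}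

theorem reorderBlocks_reorderBlocks (σ τ : Equiv.Perm (Fin d)) :
    reorderBlocks (reorderBlocks L d σ) d τ = reorderBlocks L d (σ * τ) := by
  simp [reorderBlocks, getD_eq_getElem?_getD]

theorem reorderBlocks_one (hL : L.length = d + 1) : reorderBlocks L d 1 = L := by
  refine ext_getElem (by simp [reorderBlocks, hL]) fun i _ hi => ?_
  simp only [reorderBlocks, Equiv.Perm.coe_one, id_eq, getD_eq_getElem?_getD, getElem_append,
    length_ofFn, List.getElem_ofFn, getElem_singleton, dite_eq_ite]
  split_ifs
  · simp [hi]
  · obtain rfl : i = d := by omega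
    simp [hi]

theorem reorderBlocks_perm (hL : L.length = d + 1) (σ : Equiv.Perm (Fin d)) :
    reorderBlocks L d σ ~ L := by
  conv_rhs => rw [← reorderBlocks_one hL]
  exact (σ.ofFn_comp_perm fun k => L.getD k []).append_right _

end Reorder

theorem blockPermute_eq_reorderBlocks (a : A) (z : List A)
    (σ : Equiv.Perm (Fin (numABlocks a z))) :
    blockPermute a z σ =
      z.takeWhile (· ≠ a) ++ (reorderBlocks (aBlocks a z) (numABlocks a z) σ).flatten := by
  simp [blockPermute, reorderBlocks, aBlocks]

theorem isABlock_of_mem_reorderBlocks {a : A} {z : List A} (h : a ∈ z)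
    {σ : Equiv.Perm (Fin (numABlocks a z))} {s : List A}
    (hs : s ∈ reorderBlocks (aBlocks a z) (numABlocks a z) σ) : IsABlock a s :=
  isABlock_of_mem_aBlocks ((reorderBlocks_perm (length_aBlocks_of_mem h) σ).mem_iff.mp hs)

theorem blockPermute_of_notMem {a : A} {z : List A} (h : a ∉ z)
    (σ : Equiv.Perm (Fin (numABlocks a z))) : blockPermute a z σ = z := by
  have hne : ∀ x ∈ z, decide (x ≠ a) = true := fun x hx => by
    simpa using ne_of_mem_of_not_mem hx h
  rw [blockPermute_eq_reorderBlocks, takeWhile_eq_self_iff.mpr hne, aBlocks,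
    dropWhile_eq_nil_iff.mpr hne]
  simp [reorderBlocks, aSegments]

theorem blockPermute_perm (a : A) (z : List A) (σ : Equiv.Perm (Fin (numABlocks a z))) :
    blockPermute a z σ ~ z := by
  by_cases h : a ∈ z
  · rw [blockPermute_eq_reorderBlocks]
    conv_rhs => rw [← takeWhile_append_flatten_aBlocks a z]
    exact ((reorderBlocks_perm (length_aBlocks_of_mem h) σ).flatten).append_left _
  · rw [blockPermute_of_notMem h]

theorem numABlocks_blockPermute (a : A) (z : List A) (σ : Equiv.Perm (Fin (numABlocks a z))) :
    numABlocks a (blockPermute a z σ) = numABlocks a z := by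
  rw [numABlocks, numABlocks, (blockPermute_perm a z σ).count_eq]

theorem blockPermute_one (a : A) (z : List A) : blockPermute a z 1 = z := by
  by_cases h : a ∈ z
  · rw [blockPermute_eq_reorderBlocks, reorderBlocks_one (length_aBlocks_of_mem h),
      takeWhile_append_flatten_aBlocks]
  · exact blockPermute_of_notMem h 1

theorem takeWhile_blockPermute (a : A) (z : List A) (σ : Equiv.Perm (Fin (numABlocks a z))) :
    (blockPermute a z σ).takeWhile (· ≠ a) = z.takeWhile (· ≠ a) := by
  by_cases h : a ∈ z
  · rw [blockPermute_eq_reorderBlocks, takeWhile_append_flatten (notMem_takeWhile_ne a z)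
      fun _ => isABlock_of_mem_reorderBlocks h]
  · rw [blockPermute_of_notMem h]

theorem aBlocks_blockPermute {a : A} {z : List A} (h : a ∈ z)
    (σ : Equiv.Perm (Fin (numABlocks a z))) :
    aBlocks a (blockPermute a z σ) = reorderBlocks (aBlocks a z) (numABlocks a z) σ := by
  have hblocks (s : List A) := isABlock_of_mem_reorderBlocks (σ := σ) h (s := s)
  rw [blockPermute_eq_reorderBlocks, aBlocks,
    dropWhile_append_flatten (notMem_takeWhile_ne a z) hblocks, aSegments_flatten hblocks]

/-- `blockPermute a z σ⁻¹` on the lists with `d` blocks (`blockSMul_numABlocks`), the identity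
elsewhere. The inverse turns the right action `blockPermute` into a left one; going through
`reorderBlocks` avoids casts along `numABlocks a z = d`. -/
def blockSMul (a : A) (d : ℕ) (σ : Equiv.Perm (Fin d)) (z : List A) : List A :=
  if numABlocks a z = d ∧ a ∈ z then
    z.takeWhile (· ≠ a) ++ (reorderBlocks (aBlocks a z) d σ⁻¹).flatten
  else z

theorem blockSMul_numABlocks (a : A) (z : List A) (σ : Equiv.Perm (Fin (numABlocks a z))) :
    blockSMul a (numABlocks a z) σ z = blockPermute a z σ⁻¹ := by
  by_cases h : a ∈ z
  · rw [blockSMul, if_pos ⟨rfl, h⟩, blockPermute_eq_reorderBlocks]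
  · rw [blockSMul, if_neg fun h' => h h'.2, blockPermute_of_notMem h]

theorem blockSMul_of_numABlocks_ne {a : A} {d : ℕ} {z : List A} (h : numABlocks a z ≠ d)
    (σ : Equiv.Perm (Fin d)) : blockSMul a d σ z = z :=
  if_neg fun h' => h h'.1

theorem exists_blockPermute_eq_blockSMul (a : A) (d : ℕ) (σ : Equiv.Perm (Fin d))
    (z : List A) : ∃ π, blockSMul a d σ z = blockPermute a z π := by
  by_cases hd : numABlocks a z = d
  · subst hd
    exact ⟨σ⁻¹, blockSMul_numABlocks a z σ⟩
  · exact ⟨1, by rw [blockSMul_of_numABlocks_ne hd, blockPermute_one]⟩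

theorem blockSMul_one (a : A) (d : ℕ) (z : List A) : blockSMul a d 1 z = z := by
  by_cases hd : numABlocks a z = d
  · subst hd
    rw [blockSMul_numABlocks, inv_one, blockPermute_one]
  · exact blockSMul_of_numABlocks_ne hd 1

theorem blockSMul_mul (a : A) (d : ℕ) (σ τ : Equiv.Perm (Fin d)) (z : List A) :
    blockSMul a d (σ * τ) z = blockSMul a d σ (blockSMul a d τ z) := by
  by_cases hd : numABlocks a z = d
  · subst hd
    by_cases ha : a ∈ z
    · have hy : numABlocks a (blockPermute a z τ⁻¹) = numABlocks a z ∧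
          a ∈ blockPermute a z τ⁻¹ :=
        ⟨numABlocks_blockPermute a z _, (blockPermute_perm a z _).mem_iff.mpr ha⟩
      rw [blockSMul_numABlocks, blockSMul_numABlocks, blockSMul, if_pos hy,
        takeWhile_blockPermute, aBlocks_blockPermute ha, reorderBlocks_reorderBlocks,
        blockPermute_eq_reorderBlocks, mul_inv_rev]
    · simp only [blockSMul_numABlocks, blockPermute_of_notMem ha]
  · rw [blockSMul_of_numABlocks_ne hd, blockSMul_of_numABlocks_ne hd,
      blockSMul_of_numABlocks_ne hd]

abbrev blockAction (a : A) (d : ℕ) : MulAction (Equiv.Perm (Fin d)) (List A) where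
  smul := blockSMul a d
  one_smul := blockSMul_one a d
  mul_smul := blockSMul_mul a d

end ABlocks

section Discrete

variable {Ω X : Type*} [MeasurableSpace Ω] [Countable X] {P : Measure Ω} {Z : Ω → X}

theorem measure_setOf_eq_tsum_ite (hZ : ∀ x, MeasurableSet {ω | Z ω = x}) (p : X → Prop)
    [DecidablePred p] : P {ω | p (Z ω)} = ∑' x, if p x then P {ω | Z ω = x} else 0 := by
  change P (Z ⁻¹' {x | p x}) = _
  rw [← tsum_measure_preimage_singleton (Set.to_countable _) fun x _ => hZ x,
    tsum_subtype {x | p x} fun x => P (Z ⁻¹' {x})]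
  simp_rw [Set.indicator_apply, Set.mem_ofPred_eq]
  rfl

theorem measurableSet_setOf_of_fiber (hZ : ∀ x, MeasurableSet {ω | Z ω = x})
    (p : X → Prop) : MeasurableSet {ω | p (Z ω)} := by
  rw [← Set.preimage_ofPred_eq, ← Set.biUnion_preimage_singleton]
  exact .biUnion (Set.to_countable _) fun x _ => hZ x

theorem tsum_measure_fiber_eq_one [IsProbabilityMeasure P] (hZ : ∀ x, MeasurableSet {ω | Z ω = x}) :
    ∑' x, P {ω | Z ω = x} = 1 := by
  simpa using (measure_setOf_eq_tsum_ite (P := P) hZ fun _ => True).symm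

end Discrete

theorem floor_mul_div_le {α : ℝ} (hα : 0 ≤ α) (n : ℕ) : (⌊α * n⌋₊ : ℝ) / n ≤ α :=
  div_le_of_le_mul₀ n.cast_nonneg hα (Nat.floor_le (by positivity))

theorem sub_one_div_le_floor_mul_div (α : ℝ) {m n : ℕ} (hm : 0 < m) (hmn : m ≤ n) :
    α - 1 / m ≤ (⌊α * n⌋₊ : ℝ) / n := by
  have hm' : (0 : ℝ) < m := by exact_mod_cast hm
  have hn : (0 : ℝ) < n := by exact_mod_cast hm.trans_le hmn
  calc α - 1 / m ≤ α - 1 / n := by gcongr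
    _ = (α * n - 1) / n := by field_simp
    _ ≤ (⌊α * n⌋₊ : ℝ) / n := by gcongr; exact (Nat.sub_one_lt_floor _).le

section BlockQuantile

variable (a : A) (Perms : (d : ℕ) → Subgroup (Equiv.Perm (Fin d)))
  [∀ d, DecidablePred (· ∈ Perms d)] (S : List A → ℝ)

noncomputable def blockQuantile (z : List A) : ℝ :=
  (∑ π : Perms (numABlocks a z),
      if S z ≤ S (blockPermute a z (π : Equiv.Perm (Fin (numABlocks a z)))) then (1 : ℝ) else 0) /
    (Fintype.card (Perms (numABlocks a z)) : ℝ)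

def BlockScoresInjective (z : List A) : Prop :=
  Function.Injective fun π : Perms (numABlocks a z) => S (blockPermute a z π)

theorem tsum_ite_blockQuantile_le (d : ℕ) (p : List A → ℝ≥0∞)
    (hp : ∀ z σ, p (blockPermute a z σ) = p z) (hlevel : ∀ z, p z ≠ 0 → numABlocks a z = d)
    (hdist : ∀ z, p z ≠ 0 → BlockScoresInjective a Perms S z)
    {α : ℝ} (hα₀ : 0 ≤ α) (hα₁ : α < 1) :
    ∑' z, (if blockQuantile a Perms S z ≤ α then p z else 0) =
      ENNReal.ofReal (⌊α * Fintype.card (Perms d)⌋₊ / Fintype.card (Perms d)) * ∑' z, p z := by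
  let _ := blockAction a d
  have hsmul (g : Perms d) (z : List A) : g • z = blockSMul a d g z := rfl
  have hq (z : List A) (hz : p z ≠ 0) :
      blockQuantile a Perms S z = randQuantile (Perms d) S z := by
    obtain rfl := hlevel z hz
    rw [blockQuantile, randQuantile, Finset.sum_boole]
    congr 2
    exact Finset.card_equiv (Equiv.inv _) (by simp [hsmul, blockSMul_numABlocks])
  rw [← tsum_ite_randQuantile_le (Perms d) p ?_ S ?_ hα₀ hα₁]
  · refine tsum_congr fun z => ?_
    by_cases hz : p z = 0
    · simp [hz]
    · rw [hq z hz]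
  · intro g z
    obtain ⟨π, hπ⟩ := exists_blockPermute_eq_blockSMul a d g z
    rw [hsmul, hπ, hp]
  · intro z hz
    obtain rfl := hlevel z hz
    convert (hdist z hz).comp inv_injective using 1
    ext g
    simp [hsmul, blockSMul_numABlocks]

end BlockQuantile

section Probability

variable {Ω : Type*} [MeasurableSpace Ω] {P : Measure Ω} {Z : Ω → List A} {a : A}

theorem measure_blockPermute_eq {N : ℕ} (hlen : ∀ᵐ ω ∂P, (Z ω).length = N)
    (hocc : ∀ᵐ ω ∂P, 2 ≤ (Z ω).count a)
    (hinv : ∀ z : List A, z.length = N → 2 ≤ z.count a →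
      ∀ σ : Equiv.Perm (Fin (numABlocks a z)),
        P {ω | Z ω = z} = P {ω | Z ω = blockPermute a z σ})
    (z : List A) (σ : Equiv.Perm (Fin (numABlocks a z))) :
    P {ω | Z ω = blockPermute a z σ} = P {ω | Z ω = z} := by
  by_cases hz : z.length = N ∧ 2 ≤ z.count a
  · exact (hinv z hz.1 hz.2 σ).symm
  · have hnull {y : List A} (hy : ¬(y.length = N ∧ 2 ≤ y.count a)) : P {ω | Z ω = y} = 0 := by
      contrapose! hy
      obtain ⟨ω, rfl, hω⟩ :=
        Measure.exists_mem_of_measure_ne_zero_of_ae hy (ae_restrict_of_ae (hlen.and hocc))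
      exact hω
    have hσ := blockPermute_perm a z σ
    rw [hnull hz, hnull (by rwa [hσ.length_eq, hσ.count_eq])]

variable [Countable A] (Perms : (d : ℕ) → Subgroup (Equiv.Perm (Fin d)))
  [∀ d, DecidablePred (· ∈ Perms d)] (S : List A → ℝ)

theorem measure_blockQuantile_le_eq_tsum (hZ : ∀ z, MeasurableSet {ω | Z ω = z})
    (hperm : ∀ z σ, P {ω | Z ω = blockPermute a z σ} = P {ω | Z ω = z})
    (hdist : ∀ᵐ ω ∂P, BlockScoresInjective a Perms S (Z ω))
    {α : ℝ} (hα₀ : 0 ≤ α) (hα₁ : α < 1) :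
    P {ω | blockQuantile a Perms S (Z ω) ≤ α} =
      ∑' z, ENNReal.ofReal (⌊α * Fintype.card (Perms (numABlocks a z))⌋₊ /
        Fintype.card (Perms (numABlocks a z))) * P {ω | Z ω = z} := by
  have hlevels (F : List A → ℝ≥0∞) :
      ∑' z, F z = ∑' d, ∑' z, if numABlocks a z = d then F z else 0 := by
    rw [ENNReal.tsum_comm]
    exact tsum_congr fun z => (tsum_ite_eq' (numABlocks a z) fun _ => F z).symm
  rw [measure_setOf_eq_tsum_ite hZ (blockQuantile a Perms S · ≤ α), hlevels, hlevels]
  refine tsum_congr fun d => ?_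
  set p : List A → ℝ≥0∞ := fun z => if numABlocks a z = d then P {ω | Z ω = z} else 0
  have hlevel (z : List A) (hz : p z ≠ 0) : numABlocks a z = d := by
    by_contra h
    exact hz (if_neg h)
  have hpos (z : List A) (hz : p z ≠ 0) : P {ω | Z ω = z} ≠ 0 := by
    rwa [show p z = _ from if_pos (hlevel z hz)] at hz
  have key := tsum_ite_blockQuantile_le a Perms S d p
    (fun z σ => by simp only [p, numABlocks_blockPermute, hperm]) hlevel
    (fun z hz => by
      obtain ⟨ω, rfl, hω⟩ :=
        Measure.exists_mem_of_measure_ne_zero_of_ae (hpos z hz) (ae_restrict_of_ae hdist)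
      exact hω) hα₀ hα₁
  calc _ = ∑' z, if blockQuantile a Perms S z ≤ α then p z else 0 :=
        tsum_congr fun z => by simp only [p]; split_ifs <;> rfl
    _ = _ := key
    _ = _ := by
        rw [← ENNReal.tsum_mul_left]
        refine tsum_congr fun z => ?_
        simp only [p, mul_ite, mul_zero]
        split_ifs with h
        · rw [h]
        · rfl

variable [IsProbabilityMeasure P]

theorem measure_blockQuantile_le_le (hZ : ∀ z, MeasurableSet {ω | Z ω = z})
    (hperm : ∀ z σ, P {ω | Z ω = blockPermute a z σ} = P {ω | Z ω = z})
    (hdist : ∀ᵐ ω ∂P, BlockScoresInjective a Perms S (Z ω))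
    {α : ℝ} (hα₀ : 0 ≤ α) (hα₁ : α < 1) :
    P {ω | blockQuantile a Perms S (Z ω) ≤ α} ≤ ENNReal.ofReal α := by
  rw [measure_blockQuantile_le_eq_tsum Perms S hZ hperm hdist hα₀ hα₁]
  calc _ ≤ ∑' z, ENNReal.ofReal α * P {ω | Z ω = z} := by
        gcongr
        exact floor_mul_div_le hα₀ _
    _ = ENNReal.ofReal α := by rw [ENNReal.tsum_mul_left, tsum_measure_fiber_eq_one hZ, mul_one]

theorem ofReal_sub_one_div_le_measure_blockQuantile_le (hZ : ∀ z, MeasurableSet {ω | Z ω = z})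
    (hperm : ∀ z σ, P {ω | Z ω = blockPermute a z σ} = P {ω | Z ω = z})
    (hdist : ∀ᵐ ω ∂P, BlockScoresInjective a Perms S (Z ω))
    {α : ℝ} (hα₀ : 0 ≤ α) (hα₁ : α < 1) {m : ℕ} (hm : 0 < m)
    (hmae : ∀ᵐ ω ∂P, m ≤ Fintype.card (Perms (numABlocks a (Z ω)))) :
    ENNReal.ofReal (α - 1 / m) ≤ P {ω | blockQuantile a Perms S (Z ω) ≤ α} := by
  rw [measure_blockQuantile_le_eq_tsum Perms S hZ hperm hdist hα₀ hα₁]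
  calc ENNReal.ofReal (α - 1 / m) = ∑' z, ENNReal.ofReal (α - 1 / m) * P {ω | Z ω = z} := by
        rw [ENNReal.tsum_mul_left, tsum_measure_fiber_eq_one hZ, mul_one]
    _ ≤ _ := by
        refine ENNReal.tsum_le_tsum fun z => ?_
        by_cases hz : P {ω | Z ω = z} = 0
        · simp [hz]
        obtain ⟨ω, rfl, hω⟩ :=
          Measure.exists_mem_of_measure_ne_zero_of_ae hz (ae_restrict_of_ae hmae)
        gcongr
        exact sub_one_div_le_floor_mul_div α hm hω

end Probability

theorem blockwise_conformal_valid_general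
    {Ω : Type*} [MeasurableSpace Ω] (P : Measure Ω) [IsProbabilityMeasure P]
    {A : Type*} [DecidableEq A] [Fintype A]
    (a : A) (N : ℕ)
    (Z : Ω → List A)
    (hZmeas : ∀ z : List A, MeasurableSet {ω | Z ω = z})
    (hlen : ∀ᵐ ω ∂P, (Z ω).length = N)
    (hocc : ∀ᵐ ω ∂P, 2 ≤ (Z ω).count a)
    (hinv : ∀ z : List A, z.length = N → 2 ≤ z.count a →
      ∀ σ : Equiv.Perm (Fin (numABlocks a z)),
        P {ω | Z ω = z} = P {ω | Z ω = blockPermute a z σ})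
    (Perms : (d : ℕ) → Subgroup (Equiv.Perm (Fin d)))
    [∀ d, DecidablePred (· ∈ Perms d)]
    (S : List A → ℝ)
    (hdist : ∀ᵐ ω ∂P, ∀ π π' : Perms (numABlocks a (Z ω)),
      S (blockPermute a (Z ω) (π : Equiv.Perm (Fin (numABlocks a (Z ω))))) =
          S (blockPermute a (Z ω) (π' : Equiv.Perm (Fin (numABlocks a (Z ω))))) → π = π')
    (α : ℝ) (hα : α ∈ Set.Ioo (0 : ℝ) 1) :
    1 - α ≤ (P {ω | α <
        (∑ π : Perms (numABlocks a (Z ω)),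
            if S (Z ω) ≤ S (blockPermute a (Z ω)
                (π : Equiv.Perm (Fin (numABlocks a (Z ω))))) then (1 : ℝ) else 0) /
          (Fintype.card (Perms (numABlocks a (Z ω))) : ℝ)}).toReal ∧
      ∀ m : ℕ, 1 ≤ m →
        (∀ᵐ ω ∂P, m ≤ Fintype.card (Perms (numABlocks a (Z ω)))) →
        (P {ω | α <
            (∑ π : Perms (numABlocks a (Z ω)),
                if S (Z ω) ≤ S (blockPermute a (Z ω)
                    (π : Equiv.Perm (Fin (numABlocks a (Z ω))))) then (1 : ℝ) else 0) /
              (Fintype.card (Perms (numABlocks a (Z ω))) : ℝ)}).toReal ≤ 1 - α + 1 / (m : ℝ) := by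
  obtain ⟨hα₀, hα₁⟩ := hα
  have hperm := measure_blockPermute_eq hlen hocc hinv
  have hcompl : P.real {ω | α < blockQuantile a Perms S (Z ω)} =
      1 - P.real {ω | blockQuantile a Perms S (Z ω) ≤ α} := by
    rw [← probReal_compl_eq_one_sub
      (measurableSet_setOf_of_fiber hZmeas (blockQuantile a Perms S · ≤ α))]
    simp only [Set.compl_ofPred, not_le]
  refine ⟨?_, fun m hm hmae => ?_⟩
  · change 1 - α ≤ P.real {ω | α < blockQuantile a Perms S (Z ω)}
    have := ENNReal.toReal_le_of_le_ofReal hα₀.le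
      (measure_blockQuantile_le_le Perms S hZmeas hperm hdist hα₀.le hα₁)
    rw [hcompl, measureReal_def]
    linarith
  · change P.real {ω | α < blockQuantile a Perms S (Z ω)} ≤ 1 - α + 1 / m
    have := (ENNReal.ofReal_le_iff_le_toReal (measure_ne_top _ _)).mp
      (ofReal_sub_one_div_le_measure_blockQuantile_le Perms S hZmeas hperm hdist hα₀.le hα₁ hm hmae)
    rw [hcompl, measureReal_def]
    linarith

/-- **Validity of block-wise randomization for Markovian data.**  Let `Z` be a random
sequence of length `N` over `A` whose law is invariant under `a`-block permutations, in
which `a` a.s. occurs at least twice.  For each `d` fix a subgroup `Perms d` of the symmetric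
group, and let `S` be a score with a.s. pairwise distinct values over the block-permutation
orbit.  Then the randomization quantile
`q(Z) = (1/|Perms_{d(Z)}|) Σ_{π} 1{S(π·Z) ≥ S(Z)}` satisfies `P(q(Z) > α) ≥ 1 − α`, and if
moreover `|Perms_{d(Z)}| ≥ m` a.s. then `P(q(Z) > α) ≤ 1 − α + 1/m`. -/
theorem blockwise_conformal_valid
    {Ω : Type*} [MeasurableSpace Ω] (P : Measure Ω) [IsProbabilityMeasure P]
    {A : Type*} [DecidableEq A] [Fintype A]
    (a : A) (N : ℕ) (hN : 1 ≤ N)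
    (Z : Ω → List A)
    (hZmeas : ∀ z : List A, MeasurableSet {ω | Z ω = z})
    (hlen : ∀ᵐ ω ∂P, (Z ω).length = N)
    (hocc : ∀ᵐ ω ∂P, 2 ≤ (Z ω).count a)
    (hinv : ∀ z : List A, z.length = N → 2 ≤ z.count a →
      ∀ σ : Equiv.Perm (Fin (numABlocks a z)),
        P {ω | Z ω = z} = P {ω | Z ω = blockPermute a z σ})
    (Perms : (d : ℕ) → Subgroup (Equiv.Perm (Fin d)))
    [∀ d, DecidablePred (· ∈ Perms d)]
    (S : List A → ℝ)
    (hdist : ∀ᵐ ω ∂P, ∀ π π' : Perms (numABlocks a (Z ω)),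
      S (blockPermute a (Z ω) (π : Equiv.Perm (Fin (numABlocks a (Z ω))))) =
          S (blockPermute a (Z ω) (π' : Equiv.Perm (Fin (numABlocks a (Z ω))))) → π = π')
    (α : ℝ) (hα : α ∈ Set.Ioo (0 : ℝ) 1) :
    1 - α ≤ (P {ω | α <
        (∑ π : Perms (numABlocks a (Z ω)),
            if S (Z ω) ≤ S (blockPermute a (Z ω)
                (π : Equiv.Perm (Fin (numABlocks a (Z ω))))) then (1 : ℝ) else 0) /
          (Fintype.card (Perms (numABlocks a (Z ω))) : ℝ)}).toReal ∧
      ∀ m : ℕ, 1 ≤ m →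
        (∀ᵐ ω ∂P, m ≤ Fintype.card (Perms (numABlocks a (Z ω)))) →
        (P {ω | α <
            (∑ π : Perms (numABlocks a (Z ω)),
                if S (Z ω) ≤ S (blockPermute a (Z ω)
                    (π : Equiv.Perm (Fin (numABlocks a (Z ω))))) then (1 : ℝ) else 0) /
              (Fintype.card (Perms (numABlocks a (Z ω))) : ℝ)}).toReal ≤ 1 - α + 1 / (m : ℝ) :=
  blockwise_conformal_valid_general P a N Z hZmeas hlen hocc hinv Perms S hdist α hα
end
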